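/- arXiv:1601.08180 — 6 statements merged into one kernel-verified Lean document; each statement's English description precedes it below -/
import Mathlib

section
/- Let F : ℂ⁺ → ℂ⁺ be an analytic function on the upper half-plane ℂ⁺ = {z ∈ ℂ : Im z > 0} satisfying F(z + 2π) = F(z) + 2π for all z ∈ ℂ⁺. Then there exists an analytic function f on the open unit disk 𝔻 = {w ∈ ℂ : |w| < 1} with Im f(w) ≥ 0 for all w ∈ 𝔻 such that F(z) = z + f(exp(iz)) for all z ∈ ℂ⁺. Conversely, for any analytic f : 𝔻 → ℂ with Im f ≥ 0 on 𝔻, the function F(z) = z + f(exp(iz)) is analytic on ℂ⁺, maps ℂ⁺ into ℂ⁺, and satisfies F(z + 2π) = F(z) + 2π for all z ∈ ℂ⁺. -/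
open Complex MeasureTheory Filter Topology

noncomputable section

open Metric Set

/-- The open upper half-plane. -/
def UHP : Set ℂ := {z : ℂ | 0 < z.im}

/-- The open unit disk. -/
def uDisk : Set ℂ := {w : ℂ | ‖w‖ < 1}

lemma uDisk_eq : uDisk = Metric.ball (0:ℂ) 1 := by ext w; simp [uDisk, Complex.dist_eq]

lemma isOpen_uDisk : IsOpen uDisk := by
  have : uDisk = Metric.ball (0:ℂ) 1 := by ext w; simp [uDisk, Complex.dist_eq]
  rw [this]; exact isOpen_ball
lemma isOpen_UHP : IsOpen UHP := isOpen_lt continuous_const Complex.continuous_im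

noncomputable def fof (F : ℂ → ℂ) : ℂ → ℂ :=
  fun w => F (-Complex.I * Complex.log w) + Complex.I * Complex.log w

lemma zlog_mem {w : ℂ} (hw : w ∈ uDisk \ {0}) :
    (-Complex.I * Complex.log w) ∈ UHP ∧
      Complex.exp (Complex.I * (-Complex.I * Complex.log w)) = w := by
  obtain ⟨hw1, hw2⟩ := hw
  have hw2 : w ≠ 0 := hw2
  constructor
  · simp only [UHP, Set.mem_setOf_eq]
    have : (-Complex.I * Complex.log w).im = -(Complex.log w).re := by
      simp [Complex.mul_im]
    rw [this, Complex.log_re]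
    have : ‖w‖ < 1 := hw1
    have h0 : 0 < ‖w‖ := by simpa using hw2
    simpa using Real.log_neg h0 this
  · rw [show Complex.I * (-Complex.I * Complex.log w) = Complex.log w by
      rw [show Complex.I * (-Complex.I * Complex.log w) = -(Complex.I*Complex.I) * Complex.log w by ring,
        Complex.I_mul_I]; ring]
    exact Complex.exp_log hw2

-- second branch for the slit
lemma zlog_mem' {w : ℂ} (hw : w ∈ uDisk \ {0}) :
    (-Complex.I * Complex.log (-w) + Real.pi) ∈ UHP ∧
      Complex.exp (Complex.I * (-Complex.I * Complex.log (-w) + Real.pi)) = w := by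
  have hw' : -w ∈ uDisk \ {0} := by
    obtain ⟨h1, h2⟩ := hw
    exact ⟨by simpa [uDisk] using h1, by simpa using h2⟩
  obtain ⟨m1, m2⟩ := zlog_mem hw'
  constructor
  · simp only [UHP, Set.mem_setOf_eq] at m1 ⊢
    simpa using m1
  · rw [mul_add, Complex.exp_add, m2]
    have : Complex.exp (Complex.I * Real.pi) = -1 := by
      rw [mul_comm]; exact Complex.exp_pi_mul_I
    rw [this]; ring

lemma add_real_mem {z : ℂ} (hz : z ∈ UHP) (r : ℝ) : z + (r:ℂ) ∈ UHP := by
  simp only [UHP, Set.mem_setOf_eq] at *; simpa using hz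

lemma per_int {F : ℂ → ℂ} (hper : ∀ z ∈ UHP, F (z + 2 * Real.pi) = F z + 2 * Real.pi) :
    ∀ (n : ℤ), ∀ z ∈ UHP, F (z + n * (2 * Real.pi)) = F z + n * (2 * Real.pi) := by
  intro n
  induction n using Int.induction_on with
  | zero => simp
  | succ k ih =>
    intro z hz
    have h1 : z + (k:ℂ) * (2 * Real.pi) ∈ UHP := by
      have := add_real_mem hz ((k:ℝ) * (2 * Real.pi)); push_cast at this ⊢; convert this using 2
    have := hper _ h1
    have h2 := ih z hz
    push_cast
    push_cast at h2 this
    rw [show z + (k + 1 : ℂ) * (2 * Real.pi) = (z + k * (2*Real.pi)) + 2*Real.pi by ring, this, h2]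
    ring
  | pred k ih =>
    intro z hz
    have h1 : z + (-(k:ℂ) - 1) * (2 * Real.pi) ∈ UHP := by
      have := add_real_mem hz ((-(k:ℝ) - 1) * (2 * Real.pi)); push_cast at this ⊢; convert this using 2
    have := hper _ h1
    have h2 := ih z hz
    push_cast
    push_cast at h2 this
    rw [show z + (-(k:ℂ) - 1) * (2 * Real.pi) + 2*Real.pi = z + (-(k:ℂ)) * (2*Real.pi) by ring, h2] at this
    linear_combination -this

lemma welldef {F : ℂ → ℂ}
    (hint : ∀ (n : ℤ), ∀ z ∈ UHP, F (z + n * (2 * Real.pi)) = F z + n * (2 * Real.pi))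
    {z₁ z₂ : ℂ} (h1 : z₁ ∈ UHP) (h2 : z₂ ∈ UHP)
    (he : Complex.exp (Complex.I * z₁) = Complex.exp (Complex.I * z₂)) :
    F z₁ - z₁ = F z₂ - z₂ := by
  rw [Complex.exp_eq_exp_iff_exists_int] at he
  obtain ⟨n, hn⟩ := he
  have hz : z₁ = z₂ + n * (2 * Real.pi) := by
    have : Complex.I * z₁ = Complex.I * (z₂ + n * (2*Real.pi)) := by rw [hn]; ring
    exact mul_left_cancel₀ Complex.I_ne_zero this
  rw [hz, hint n z₂ h2]; ring

lemma abs_exp_I (z : ℂ) : ‖Complex.exp (Complex.I * z)‖ = Real.exp (-z.im) := by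
  rw [Complex.norm_exp]; congr 1; simp

lemma mem_exp_I {z : ℂ} (hz : z ∈ UHP) : Complex.exp (Complex.I * z) ∈ uDisk \ {0} := by
  refine ⟨?_, Complex.exp_ne_zero _⟩
  simp only [uDisk, Set.mem_setOf_eq, abs_exp_I]
  exact Real.exp_lt_one_iff.mpr (by simpa using hz.out)

/-- For w in the punctured disk, fof F w = F z - z for ANY z in UHP with exp(Iz) = w. -/
lemma fof_spec {F : ℂ → ℂ}
    (hint : ∀ (n : ℤ), ∀ z ∈ UHP, F (z + n * (2 * Real.pi)) = F z + n * (2 * Real.pi))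
    {z : ℂ} (hz : z ∈ UHP) : fof F (Complex.exp (Complex.I * z)) = F z - z := by
  set w := Complex.exp (Complex.I * z) with hwdef
  obtain ⟨m1, m2⟩ := zlog_mem (mem_exp_I hz)
  have := welldef hint m1 hz (by rw [m2])
  simpa [fof, sub_eq_iff_eq_add] using this

lemma fof_diff {F : ℂ → ℂ} (hF : DifferentiableOn ℂ F UHP)
    (hint : ∀ (n : ℤ), ∀ z ∈ UHP, F (z + n * (2 * Real.pi)) = F z + n * (2 * Real.pi)) :
    DifferentiableOn ℂ (fof F) (uDisk \ {0}) := by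
  have hopen : IsOpen (uDisk \ {0}) := isOpen_uDisk.sdiff isClosed_singleton
  intro w₀ hw₀
  apply DifferentiableAt.differentiableWithinAt
  have hFat : ∀ {ζ : ℂ}, ζ ∈ UHP → DifferentiableAt ℂ F ζ := fun h =>
    hF.differentiableAt (isOpen_UHP.mem_nhds h)
  by_cases hs : w₀ ∈ Complex.slitPlane
  · have hlog : DifferentiableAt ℂ Complex.log w₀ := Complex.differentiableAt_log hs
    have hz : (-Complex.I * Complex.log w₀) ∈ UHP := (zlog_mem hw₀).1
    exact ((hFat hz).comp w₀ ((differentiableAt_const _).mul hlog)).add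
      ((differentiableAt_const _).mul hlog)
  · -- w₀ is a nonzero non-positive real; use the other branch
    have hs' : -w₀ ∈ Complex.slitPlane := by
      simp only [Complex.slitPlane, Set.mem_setOf_eq, not_or, not_lt, ne_eq, not_not] at hs ⊢
      have hne : w₀ ≠ 0 := hw₀.2
      left
      simp only [Complex.neg_re]
      rcases lt_or_eq_of_le hs.1 with h | h
      · linarith
      · exact absurd (Complex.ext (by simpa using h) (by simpa using hs.2)) hne
    set g : ℂ → ℂ := fun w =>
      F (-Complex.I * Complex.log (-w) + Real.pi) + (Complex.I * Complex.log (-w) - Real.pi)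
      with hgdef
    have hg : DifferentiableAt ℂ g w₀ := by
      have hlog : DifferentiableAt ℂ (fun w : ℂ => Complex.log (-w)) w₀ :=
        (Complex.differentiableAt_log hs').comp w₀ differentiableAt_id.neg
      have hz : (-Complex.I * Complex.log (-w₀) + Real.pi) ∈ UHP := (zlog_mem' hw₀).1
      have h1 : DifferentiableAt ℂ (fun w : ℂ => -Complex.I * Complex.log (-w) + Real.pi) w₀ :=
        (((differentiableAt_const (-Complex.I)).mul hlog).add (differentiableAt_const _))
      exact ((hFat hz).comp w₀ h1).add
        (((differentiableAt_const Complex.I).mul hlog).sub (differentiableAt_const _))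
    have heq : (fof F) =ᶠ[nhds w₀] g := by
      filter_upwards [hopen.mem_nhds hw₀] with w hw
      obtain ⟨m1, m2⟩ := zlog_mem hw
      obtain ⟨n1, n2⟩ := zlog_mem' hw
      have := welldef hint m1 n1 (by rw [m2, n2])
      simp only [fof, hgdef]
      linear_combination this
    exact hg.congr_of_eventuallyEq heq

-- the hard lemma
lemma imF_ge {F : ℂ → ℂ} (hF : DifferentiableOn ℂ F UHP) (hmaps : Set.MapsTo F UHP UHP)
    (hper : ∀ z ∈ UHP, F (z + 2 * Real.pi) = F z + 2 * Real.pi) :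
    ∀ z ∈ UHP, z.im ≤ (F z).im := by
  have hint := per_int hper
  set H : ℂ → ℂ := fun w => w * Complex.exp (Complex.I * fof F w) with hHdef
  have hH : DifferentiableOn ℂ H (uDisk \ {0}) :=
    differentiableOn_id.mul (((fof_diff hF hint).const_mul Complex.I).cexp)
  have key : ∀ z ∈ UHP, H (Complex.exp (Complex.I * z)) = Complex.exp (Complex.I * F z) := by
    intro z hz
    simp only [hHdef]
    rw [fof_spec hint hz, ← Complex.exp_add]
    ring_nf
  have hbnd : ∀ w ∈ uDisk \ {0}, ‖H w‖ < 1 := by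
    intro w hw
    obtain ⟨m1, m2⟩ := zlog_mem hw
    have : H w = Complex.exp (Complex.I * F (-Complex.I * Complex.log w)) := by
      conv_lhs => rw [← m2]
      exact key _ m1
    rw [this, abs_exp_I]
    exact Real.exp_lt_one_iff.mpr (by simpa using (hmaps m1).out)
  have h0disk : (0:ℂ) ∈ uDisk := by simp [uDisk]
  have hdisk_nhds : uDisk ∈ nhds (0:ℂ) := isOpen_uDisk.mem_nhds h0disk
  set Htil := Function.update H 0 (limUnder (nhdsWithin 0 {(0:ℂ)}ᶜ) H) with hHtdef
  have hHtil : DifferentiableOn ℂ Htil uDisk := by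
    apply Complex.differentiableOn_update_limUnder_of_bddAbove hdisk_nhds hH
    refine ⟨1, ?_⟩
    rintro - ⟨w, hw, rfl⟩
    exact le_of_lt (by simpa using hbnd w hw)
  have hHeq : ∀ w : ℂ, w ≠ 0 → Htil w = H w := fun w hw => Function.update_of_ne hw _ _
  have hcont0 : ContinuousAt Htil 0 := (hHtil.differentiableAt hdisk_nhds).continuousAt
  have htends : Tendsto H (nhdsWithin 0 {(0:ℂ)}ᶜ) (nhds (Htil 0)) := by
    apply Filter.Tendsto.congr' _ (hcont0.tendsto.mono_left nhdsWithin_le_nhds)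
    filter_upwards [self_mem_nhdsWithin] with w hw
    exact hHeq w hw
  -- Htil 0 = 0 by monodromy
  have hH0 : Htil 0 = 0 := by
    by_contra h0
    set a := Htil 0 with hadef
    have hc2 : ContinuousAt (fun w => Htil w / a) 0 := hcont0.div_const a
    have hval : (fun w => Htil w / a) 0 = 1 := div_self h0
    have hev1 : ∀ᶠ w in nhds (0:ℂ), ‖Htil w / a - 1‖ < 1 := by
      have h := hc2.tendsto
      have hv : Htil 0 / a = 1 := div_self h0
      rw [hv] at h
      have := Metric.tendsto_nhds.mp h 1 one_pos
      simpa [Complex.dist_eq] using this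
    have hev0 : ∀ᶠ w in nhds (0:ℂ), w ∈ uDisk := hdisk_nhds
    have hcomb : ∀ᶠ w in nhds (0:ℂ), w ∈ uDisk ∧ ‖Htil w / a - 1‖ < 1 :=
      hev0.and hev1
    rw [Metric.eventually_nhds_iff] at hcomb
    obtain ⟨ε, hε, hεh⟩ := hcomb
    have hεh' : ∀ w : ℂ, ‖w‖ < ε → w ∈ uDisk ∧ ‖Htil w / a - 1‖ < 1 := by
      intro w hw; exact hεh (by simpa [Complex.dist_eq] using hw)
    set ψ : ℂ → ℂ := fun w => Complex.log (Htil w / a) + Complex.log a with hψdef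
    have hslit : ∀ x : ℂ, ‖x - 1‖ < 1 → x ∈ Complex.slitPlane := by
      intro x hx
      left
      have := Complex.abs_re_le_norm (x - 1)
      have hre : |x.re - 1| ≤ ‖x - 1‖ := by simpa using this
      have := abs_lt.mp (lt_of_le_of_lt hre hx)
      linarith [this.1]
    have hψexp : ∀ w : ℂ, ‖Htil w / a - 1‖ < 1 → Complex.exp (ψ w) = Htil w := by
      intro w hw
      have hne : Htil w / a ≠ 0 := by
        intro h; rw [h] at hw; simpa using hw
      rw [hψdef]
      simp only
      rw [Complex.exp_add, Complex.exp_log hne, Complex.exp_log h0]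
      exact div_mul_cancel₀ _ h0
    have hψcont : ∀ w : ℂ, w ∈ uDisk → ‖Htil w / a - 1‖ < 1 → ContinuousAt ψ w := by
      intro w hw hb
      have h1 : ContinuousAt Htil w := (hHtil.differentiableAt (isOpen_uDisk.mem_nhds hw)).continuousAt
      have h2 : ContinuousAt (fun w => Htil w / a) w := h1.div_const a
      have h3 : ContinuousAt (Complex.log ∘ (fun w => Htil w / a)) w :=
        ContinuousAt.comp (x := w) (g := Complex.log) (f := fun w => Htil w / a)
          (continuousAt_clog (hslit _ hb)) h2
      have h4 : ContinuousAt (fun w => Complex.log (Htil w / a)) w := h3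
      exact h4.add continuousAt_const
    set Y : ℝ := max 0 (-Real.log ε) with hYdef
    set S : Set ℂ := {z : ℂ | Y < z.im} with hSdef
    have hSopen : IsOpen S := isOpen_lt continuous_const Complex.continuous_im
    have hSU : S ⊆ UHP := fun z hz => show 0 < z.im from lt_of_le_of_lt (le_max_left 0 _) hz
    have hSmall : ∀ z ∈ S, ‖Complex.exp (Complex.I * z)‖ < ε := by
      intro z hz
      rw [abs_exp_I]
      calc Real.exp (-z.im) < Real.exp (Real.log ε) := by
            apply Real.exp_lt_exp.mpr
            have h1 : -Real.log ε ≤ Y := le_max_right _ _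
            have h2 : Y < z.im := hz
            linarith
        _ = ε := Real.exp_log hε
    set φ : ℂ → ℂ := fun z => Complex.I * F z - ψ (Complex.exp (Complex.I * z)) with hφdef
    have hφ1 : ∀ z ∈ S, Complex.exp (φ z) = 1 := by
      intro z hz
      have hzU : z ∈ UHP := hSU hz
      have hw := mem_exp_I hzU
      have hwb := hεh' _ (hSmall z hz)
      have h1 : Complex.exp (Complex.I * F z) = Htil (Complex.exp (Complex.I * z)) := by
        rw [hHeq _ hw.2, key z hzU]
      rw [hφdef]
      simp only
      rw [Complex.exp_sub, h1, hψexp _ hwb.2]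
      apply div_self
      rw [← hψexp _ hwb.2]
      exact Complex.exp_ne_zero _
    have hφint : ∀ z ∈ S, ∃ n : ℤ, φ z = n * (2 * Real.pi * Complex.I) := by
      intro z hz
      exact Complex.exp_eq_one_iff.mp (hφ1 z hz)
    have hφcont : ∀ z ∈ S, ContinuousAt φ z := by
      intro z hz
      have hzU : z ∈ UHP := hSU hz
      have h1 : ContinuousAt F z := (hF.differentiableAt (isOpen_UHP.mem_nhds hzU)).continuousAt
      have h2 : ContinuousAt (fun z : ℂ => Complex.exp (Complex.I * z)) z :=
        (Complex.continuous_exp.comp (continuous_const.mul continuous_id)).continuousAt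
      have hwb := hεh' _ (hSmall z hz)
      have h3 : ContinuousAt ψ (Complex.exp (Complex.I * z)) :=
        hψcont _ (hεh' _ (hSmall z hz)).1 hwb.2
      have h4 : ContinuousAt (ψ ∘ (fun z : ℂ => Complex.exp (Complex.I * z))) z :=
        ContinuousAt.comp (x := z) (g := ψ) (f := fun z : ℂ => Complex.exp (Complex.I * z)) h3 h2
      have h5 : ContinuousAt (fun z : ℂ => ψ (Complex.exp (Complex.I * z))) z := h4
      exact (continuousAt_const.mul h1).sub h5
    -- local constancy
    have hloc : ∀ z₀ ∈ S, ∀ᶠ z in nhds z₀, z ∈ S ∧ φ z = φ z₀ := by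
      intro z₀ hz₀
      have h1 : ∀ᶠ z in nhds z₀, z ∈ S := hSopen.mem_nhds hz₀
      have h2 : ∀ᶠ z in nhds z₀, ‖φ z - φ z₀‖ < 2 * Real.pi := by
        have := Metric.tendsto_nhds.mp (hφcont z₀ hz₀).tendsto (2 * Real.pi) Real.two_pi_pos
        simpa [Complex.dist_eq] using this
      filter_upwards [h1, h2] with z hS hd
      refine ⟨hS, ?_⟩
      obtain ⟨n, hn⟩ := hφint z hS
      obtain ⟨m, hm⟩ := hφint z₀ hz₀
      have hdiff : φ z - φ z₀ = ((n - m : ℤ) : ℂ) * (2 * Real.pi * Complex.I) := by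
        rw [hn, hm]; push_cast; ring
      by_cases hnm : n = m
      · rw [hn, hm, hnm]
      · exfalso
        rw [hdiff] at hd
        have h1 : ‖((n - m : ℤ) : ℂ) * (2 * Real.pi * Complex.I)‖
            = |((n - m : ℤ) : ℝ)| * (2 * Real.pi) := by
          rw [norm_mul, norm_mul, norm_mul, Complex.norm_I,
            show ((2:ℂ)) = ((2:ℝ):ℂ) by norm_num, Complex.norm_real,
            show ((((n-m):ℤ)):ℂ) = ((((n-m):ℤ):ℝ):ℂ) by push_cast; ring, Complex.norm_real,
            Complex.norm_real, Real.norm_eq_abs, Real.norm_eq_abs, Real.norm_eq_abs,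
            abs_of_pos Real.pi_pos]
          norm_num
        rw [h1] at hd
        have h2 : (1 : ℝ) ≤ |((n - m : ℤ) : ℝ)| := by
          rw [← Int.cast_abs]
          exact_mod_cast Int.one_le_abs (sub_ne_zero.mpr hnm)
        nlinarith [Real.two_pi_pos]
    -- constancy on S
    have hconst : ∀ z₁ ∈ S, ∀ z₂ ∈ S, φ z₁ = φ z₂ := by
      intro z₁ hz₁ z₂ hz₂
      set u : Set ℂ := {z | z ∈ S ∧ φ z = φ z₁} with hudef
      set v : Set ℂ := {z | z ∈ S ∧ φ z ≠ φ z₁} with hvdef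
      have hu : IsOpen u := by
        rw [isOpen_iff_mem_nhds]
        rintro z ⟨hzS, hzφ⟩
        filter_upwards [hloc z hzS] with x ⟨hx1, hx2⟩
        exact ⟨hx1, hx2.trans hzφ⟩
      have hv : IsOpen v := by
        rw [isOpen_iff_mem_nhds]
        rintro z ⟨hzS, hzφ⟩
        filter_upwards [hloc z hzS] with x ⟨hx1, hx2⟩
        exact ⟨hx1, hx2.symm ▸ hzφ⟩
      have hdisj : Disjoint u v := by
        rw [Set.disjoint_iff]
        rintro z ⟨⟨_, h1⟩, ⟨_, h2⟩⟩
        exact h2 h1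
      have hsub : S ⊆ u ∪ v := by
        intro z hz
        by_cases h : φ z = φ z₁
        · exact Or.inl ⟨hz, h⟩
        · exact Or.inr ⟨hz, h⟩
      have hpre : IsPreconnected S := (convex_halfSpace_im_gt Y).isPreconnected
      have := hpre.subset_left_of_subset_union hu hv hdisj hsub ⟨z₁, hz₁, hz₁, rfl⟩
      exact ((this hz₂).2).symm
    -- contradiction
    set z₀ : ℂ := Complex.I * (Y + 1) with hz₀def
    have hz₀im : z₀.im = Y + 1 := by simp [hz₀def]
    have hz₀S : z₀ ∈ S := by rw [hSdef]; simp only [Set.mem_setOf_eq, hz₀im]; linarith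
    have hz₁S : z₀ + 2 * Real.pi ∈ S := by
      rw [hSdef]
      simp only [Set.mem_setOf_eq]
      have : (z₀ + 2 * Real.pi).im = z₀.im := by simp
      rw [this, hz₀im]; linarith
    have hexp_per : Complex.exp (Complex.I * (z₀ + 2 * Real.pi)) = Complex.exp (Complex.I * z₀) := by
      rw [mul_add, Complex.exp_add]
      have : Complex.exp (Complex.I * (2 * Real.pi)) = 1 := by
        rw [show Complex.I * (2 * Real.pi) = 2 * Real.pi * Complex.I by ring]
        exact Complex.exp_two_pi_mul_I
      rw [this, mul_one]
    have hc := hconst _ hz₁S _ hz₀S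
    have : φ (z₀ + 2 * Real.pi) = φ z₀ + 2 * Real.pi * Complex.I := by
      rw [hφdef]
      simp only
      rw [hexp_per, hper z₀ (hSU hz₀S)]
      ring
    rw [this] at hc
    have : (2 * Real.pi * Complex.I : ℂ) = 0 := by linear_combination hc
    simp [Complex.ext_iff, Real.pi_ne_zero] at this
  -- Schwarz
  have hmapsB : Set.MapsTo Htil (Metric.ball 0 1) (Metric.ball 0 1) := by
    intro w hw
    rw [mem_ball_zero_iff] at hw ⊢
    by_cases h : w = 0
    · rw [h, hH0]; simpa using one_pos
    · rw [hHeq w h]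
      have : w ∈ uDisk \ {0} := ⟨hw, h⟩
      simpa using hbnd w this
  have hdiffB : DifferentiableOn ℂ Htil (Metric.ball 0 1) := by rwa [← uDisk_eq]
  intro z hz
  have hw := mem_exp_I hz
  have h1 : ‖Htil (Complex.exp (Complex.I * z))‖
      ≤ ‖Complex.exp (Complex.I * z)‖ :=
    Complex.norm_le_norm_of_mapsTo_ball hdiffB (hmapsB.mono_right ball_subset_closedBall) hH0 hw.1
  rw [hHeq _ hw.2, key z hz, abs_exp_I, abs_exp_I] at h1
  have := Real.exp_le_exp.mp h1
  linarith

lemma forward {F : ℂ → ℂ} (hF : DifferentiableOn ℂ F UHP) (hmaps : Set.MapsTo F UHP UHP)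
    (hper : ∀ z ∈ UHP, F (z + 2 * Real.pi) = F z + 2 * Real.pi) :
    ∃ f : ℂ → ℂ,
      DifferentiableOn ℂ f uDisk ∧
      (∀ w ∈ uDisk, 0 ≤ (f w).im) ∧
      (∀ z ∈ UHP, F z = z + f (Complex.exp (Complex.I * z))) := by
  have hint := per_int hper
  have himge := imF_ge hF hmaps hper
  have hopen' : IsOpen (uDisk \ {0}) := isOpen_uDisk.sdiff isClosed_singleton
  have h0disk : (0:ℂ) ∈ uDisk := by simp [uDisk]
  have hdisk_nhds : uDisk ∈ nhds (0:ℂ) := isOpen_uDisk.mem_nhds h0disk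
  have hfdiff := fof_diff hF hint
  have hfat : ∀ w ∈ uDisk \ {0}, DifferentiableAt ℂ (fof F) w := fun w hw =>
    hfdiff.differentiableAt (hopen'.mem_nhds hw)
  have hfim : ∀ w ∈ uDisk \ {0}, 0 ≤ (fof F w).im := by
    intro w hw
    obtain ⟨m1, m2⟩ := zlog_mem hw
    have h := fof_spec hint m1
    rw [m2] at h
    rw [h, Complex.sub_im]
    have := himge _ m1
    linarith
  have denom : ∀ w ∈ uDisk \ {0}, fof F w + Complex.I ≠ 0 := by
    intro w hw h
    have h2 : (fof F w + Complex.I).im = 0 := by rw [h]; simp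
    rw [Complex.add_im, Complex.I_im] at h2
    have := hfim w hw
    linarith
  set g : ℂ → ℂ := fun w => (fof F w - Complex.I) / (fof F w + Complex.I) with hgdef
  have habsg : ∀ w ∈ uDisk \ {0}, ‖g w‖ ≤ 1 := by
    intro w hw
    have hpos : 0 < ‖fof F w + Complex.I‖ :=
      norm_pos_iff.mpr (denom w hw)
    rw [hgdef]
    simp only [norm_div]
    rw [div_le_one hpos]
    have h1 : (‖fof F w - Complex.I‖)^2 ≤ (‖fof F w + Complex.I‖)^2 := by
      rw [Complex.sq_norm, Complex.sq_norm, Complex.normSq_apply, Complex.normSq_apply]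
      simp only [Complex.sub_re, Complex.sub_im, Complex.add_re, Complex.add_im,
        Complex.I_re, Complex.I_im]
      have := hfim w hw
      nlinarith
    nlinarith [norm_nonneg (fof F w - Complex.I),
      norm_nonneg (fof F w + Complex.I)]
  have gdiff : DifferentiableOn ℂ g (uDisk \ {0}) :=
    (hfdiff.sub (differentiableOn_const _)).div (hfdiff.add (differentiableOn_const _)) denom
  set gtil := Function.update g 0 (limUnder (nhdsWithin 0 {(0:ℂ)}ᶜ) g) with hgtdef
  have hgtil : DifferentiableOn ℂ gtil uDisk := by
    apply Complex.differentiableOn_update_limUnder_of_bddAbove hdisk_nhds gdiff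
    exact ⟨1, by rintro - ⟨w, hw, rfl⟩; exact (by simpa using habsg w hw)⟩
  have hgeq : ∀ w : ℂ, w ≠ 0 → gtil w = g w := fun w hw => Function.update_of_ne hw _ _
  have hgcont0 : ContinuousAt gtil 0 := (hgtil.differentiableAt hdisk_nhds).continuousAt
  have hgtends : Tendsto g (nhdsWithin 0 {(0:ℂ)}ᶜ) (nhds (gtil 0)) := by
    apply Filter.Tendsto.congr' _ (hgcont0.tendsto.mono_left nhdsWithin_le_nhds)
    filter_upwards [self_mem_nhdsWithin] with w hw
    exact hgeq w hw
  have habsg0 : ‖gtil 0‖ ≤ 1 := by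
    have h1 : Tendsto (fun w => ‖g w‖) (nhdsWithin 0 {(0:ℂ)}ᶜ)
        (nhds (‖gtil 0‖)) := (continuous_norm.continuousAt.tendsto).comp hgtends
    apply le_of_tendsto h1
    filter_upwards [nhdsWithin_le_nhds hdisk_nhds, self_mem_nhdsWithin] with w h1 h2
    exact habsg w ⟨h1, h2⟩
  have g1ne : ∀ w ∈ uDisk \ {0}, g w ≠ 1 := by
    intro w hw h
    rw [hgdef] at h
    simp only at h
    rw [div_eq_one_iff_eq (denom w hw)] at h
    have : (Complex.I : ℂ) = 0 := by linear_combination -(h/2)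
    exact Complex.I_ne_zero this
  -- the point w₁ = exp(I*I) witnesses nonemptiness
  have hIU : Complex.I ∈ UHP := by simp [UHP]
  by_cases hone : ‖gtil 0‖ = 1
  · -- constant case
    have hmax : IsMaxOn (norm ∘ gtil) uDisk 0 := by
      intro w hw
      simp only [Set.mem_setOf_eq, Function.comp_apply, hone]
      by_cases h : w = 0
      · rw [h, hone]
      · rw [hgeq w h]; exact habsg w ⟨hw, h⟩
    have hpre : IsPreconnected uDisk := by rw [uDisk_eq]; exact (convex_ball _ _).isPreconnected
    have heqc := Complex.eqOn_of_isPreconnected_of_isMaxOn_norm hpre isOpen_uDisk hgtil h0disk hmax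
    set c := gtil 0 with hcdef
    have hw₁ := mem_exp_I hIU
    have hgc : ∀ w ∈ uDisk \ {0}, g w = c := by
      intro w hw
      rw [← hgeq w hw.2]
      exact heqc hw.1
    have hcne1 : c ≠ 1 := by
      intro h
      exact g1ne _ hw₁ ((hgc _ hw₁).trans h)
    set d : ℂ := Complex.I * (1 + c) / (1 - c) with hddef
    have hfd : ∀ w ∈ uDisk \ {0}, fof F w = d := by
      intro w hw
      have h1 : fof F w - Complex.I = c * (fof F w + Complex.I) := by
        rw [← hgc w hw]
        simp only [hgdef]
        field_simp [denom w hw]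
      rw [hddef, eq_div_iff (sub_ne_zero.mpr (Ne.symm hcne1))]
      linear_combination h1
    refine ⟨fun _ => d, differentiableOn_const _, ?_, ?_⟩
    · intro w _
      rw [← hfd _ hw₁]
      exact hfim _ hw₁
    · intro z hz
      have h1 := fof_spec hint hz
      have h2 := hfd _ (mem_exp_I hz)
      rw [h2] at h1
      linear_combination -h1
  · -- bounded case
    have habslt : ‖gtil 0‖ < 1 := lt_of_le_of_ne habsg0 hone
    set r : ℝ := (1 + ‖gtil 0‖) / 2 with hrdef
    have hr1 : r < 1 := by rw [hrdef]; linarith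
    have hr0 : 0 ≤ r := by
      rw [hrdef]
      have := norm_nonneg (gtil 0)
      linarith
    have hδ : (0:ℝ) < (1 - ‖gtil 0‖) / 2 := by linarith
    have hevr : ∀ᶠ w in nhdsWithin 0 {(0:ℂ)}ᶜ, ‖g w‖ ≤ r := by
      have h1 := Metric.tendsto_nhds.mp hgtends _ hδ
      filter_upwards [h1] with w hw
      rw [Complex.dist_eq] at hw
      calc ‖g w‖ ≤ ‖g w - gtil 0‖ + ‖gtil 0‖ := by
            have := norm_add_le (g w - gtil 0) (gtil 0); simpa using this
        _ ≤ r := by rw [hrdef]; linarith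
    set M : ℝ := (1 + r) / (1 - r) with hMdef
    have hevf : ∀ᶠ w in nhdsWithin 0 {(0:ℂ)}ᶜ, w ∈ uDisk ∧ ‖fof F w‖ ≤ M := by
      filter_upwards [hevr, nhdsWithin_le_nhds hdisk_nhds, self_mem_nhdsWithin] with w h1 h2 h3
      refine ⟨h2, ?_⟩
      have hw : w ∈ uDisk \ {0} := ⟨h2, h3⟩
      have hgi : g w * (fof F w + Complex.I) = fof F w - Complex.I := by
        rw [hgdef]
        exact div_mul_cancel₀ _ (denom w hw)
      have hfg : fof F w * (1 - g w) = Complex.I * (1 + g w) := by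
        linear_combination -hgi
      have habs_eq : ‖fof F w‖ * ‖1 - g w‖
          = ‖1 + g w‖ := by
        have := congrArg norm hfg
        rwa [norm_mul, norm_mul, Complex.norm_I, one_mul] at this
      have t1 : 1 - r ≤ ‖1 - g w‖ := by
        have := norm_add_le (1 - g w) (g w)
        simp only [sub_add_cancel, norm_one] at this
        linarith
      have t2 : ‖1 + g w‖ ≤ 1 + r := by
        have := norm_add_le 1 (g w)
        simp only [norm_one] at this
        linarith
      have hpos : (0:ℝ) < 1 - r := by linarith
      rw [hMdef, le_div_iff₀ hpos]
      calc ‖fof F w‖ * (1 - r)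
            ≤ ‖fof F w‖ * ‖1 - g w‖ :=
              mul_le_mul_of_nonneg_left t1 (norm_nonneg _)
        _ = ‖1 + g w‖ := habs_eq
        _ ≤ 1 + r := t2
    rw [eventually_nhdsWithin_iff] at hevf
    obtain ⟨s, hsnh, hs⟩ := Filter.eventually_iff_exists_mem.mp hevf
    set ftil := Function.update (fof F) 0 (limUnder (nhdsWithin 0 {(0:ℂ)}ᶜ) (fof F)) with hftdef
    have hdiffs : DifferentiableOn ℂ (fof F) (s \ {0}) := by
      intro w hw
      exact (hfat w ⟨(hs w hw.1 hw.2).1, hw.2⟩).differentiableWithinAt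
    have hbdds : BddAbove (norm ∘ fof F '' (s \ {0})) := by
      refine ⟨M, ?_⟩
      rintro - ⟨w, hw, rfl⟩
      simpa using (hs w hw.1 hw.2).2
    have hftils : DifferentiableOn ℂ ftil s :=
      Complex.differentiableOn_update_limUnder_of_bddAbove hsnh hdiffs hbdds
    have hf0at : DifferentiableAt ℂ ftil 0 := hftils.differentiableAt hsnh
    have hfteq : ∀ w : ℂ, w ≠ 0 → ftil w = fof F w := fun w hw => Function.update_of_ne hw _ _
    have hftil : DifferentiableOn ℂ ftil uDisk := by
      intro w hw
      by_cases h : w = 0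
      · rw [h]; exact hf0at.differentiableWithinAt
      · apply DifferentiableAt.differentiableWithinAt
        apply (hfat w ⟨hw, h⟩).congr_of_eventuallyEq
        filter_upwards [compl_singleton_mem_nhds h] with x hx
        exact hfteq x hx
    have hftends : Tendsto (fof F) (nhdsWithin 0 {(0:ℂ)}ᶜ) (nhds (ftil 0)) := by
      apply Filter.Tendsto.congr' _ (hf0at.continuousAt.tendsto.mono_left nhdsWithin_le_nhds)
      filter_upwards [self_mem_nhdsWithin] with w hw
      exact hfteq w hw
    refine ⟨ftil, hftil, ?_, ?_⟩
    · intro w hw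
      by_cases h : w = 0
      · rw [h]
        have h1 : Tendsto (fun w => (fof F w).im) (nhdsWithin 0 {(0:ℂ)}ᶜ)
            (nhds ((ftil 0).im)) := (Complex.continuous_im.continuousAt.tendsto).comp hftends
        apply ge_of_tendsto h1
        filter_upwards [nhdsWithin_le_nhds hdisk_nhds, self_mem_nhdsWithin] with x h1 h2
        exact hfim x ⟨h1, h2⟩
      · rw [hfteq w h]
        exact hfim w ⟨hw, h⟩
    · intro z hz
      rw [hfteq _ (mem_exp_I hz).2, fof_spec hint hz]
      ring

lemma converse (f : ℂ → ℂ) (hf : DifferentiableOn ℂ f uDisk)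
    (him : ∀ w ∈ uDisk, 0 ≤ (f w).im) :
    (DifferentiableOn ℂ (fun z => z + f (Complex.exp (Complex.I * z))) UHP ∧
     Set.MapsTo (fun z => z + f (Complex.exp (Complex.I * z))) UHP UHP ∧
     (∀ z ∈ UHP, (z + 2 * Real.pi) + f (Complex.exp (Complex.I * (z + 2 * Real.pi)))
        = (z + f (Complex.exp (Complex.I * z))) + 2 * Real.pi)) := by
  have hexp_per : ∀ z : ℂ, Complex.exp (Complex.I * (z + 2 * Real.pi))
      = Complex.exp (Complex.I * z) := by
    intro z
    rw [mul_add, Complex.exp_add]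
    have : Complex.exp (Complex.I * (2 * Real.pi)) = 1 := by
      rw [show Complex.I * (2 * (Real.pi:ℂ)) = 2 * Real.pi * Complex.I by ring]
      exact Complex.exp_two_pi_mul_I
    rw [this, mul_one]
  refine ⟨?_, ?_, ?_⟩
  · intro z hz
    apply DifferentiableAt.differentiableWithinAt
    have h1 : DifferentiableAt ℂ (fun z : ℂ => Complex.exp (Complex.I * z)) z :=
      (Complex.differentiable_exp.comp ((differentiable_const _).mul differentiable_id)).differentiableAt
    have h2 : DifferentiableAt ℂ f (Complex.exp (Complex.I * z)) :=
      hf.differentiableAt (isOpen_uDisk.mem_nhds (mem_exp_I hz).1)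
    exact differentiableAt_id.add (h2.comp z h1)
  · intro z hz
    have h1 := him _ (mem_exp_I hz).1
    have h2 : 0 < z.im := hz
    show 0 < (z + f (Complex.exp (Complex.I * z))).im
    rw [Complex.add_im]
    linarith
  · intro z _
    rw [hexp_per z]
    ring

/-- An analytic self-map `F` of the upper half-plane with `F(z + 2π) = F(z) + 2π`
can be written `F(z) = z + f(exp(iz))` for an analytic `f : 𝔻 → closure(ℂ⁺)`, and
conversely any such formula yields such a map. -/
theorem wrapping_class_characterization :
    (∀ F : ℂ → ℂ,
      DifferentiableOn ℂ F UHP →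
      Set.MapsTo F UHP UHP →
      (∀ z ∈ UHP, F (z + 2 * Real.pi) = F z + 2 * Real.pi) →
      ∃ f : ℂ → ℂ,
        DifferentiableOn ℂ f uDisk ∧
        (∀ w ∈ uDisk, 0 ≤ (f w).im) ∧
        (∀ z ∈ UHP, F z = z + f (Complex.exp (Complex.I * z)))) ∧
    (∀ f : ℂ → ℂ,
      DifferentiableOn ℂ f uDisk →
      (∀ w ∈ uDisk, 0 ≤ (f w).im) →
      (DifferentiableOn ℂ (fun z => z + f (Complex.exp (Complex.I * z))) UHP ∧
       Set.MapsTo (fun z => z + f (Complex.exp (Complex.I * z))) UHP UHP ∧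
       (∀ z ∈ UHP, (z + 2 * Real.pi) + f (Complex.exp (Complex.I * (z + 2 * Real.pi)))
          = (z + f (Complex.exp (Complex.I * z))) + 2 * Real.pi))) := by
  exact ⟨fun F hF hmaps hper => forward hF hmaps hper, fun f hf him => converse f hf him⟩

end
end

section
/- Let μ be a probability measure on ℝ whose F-transform F_μ satisfies F_μ(z + 2π) = F_μ(z) + 2π for all z ∈ ℂ⁺, and write F_μ(z) = z + f(exp(iz)) with f analytic on the open unit disk 𝔻 and Im f ≥ 0. Then for every z ∈ ℂ⁺, the n-fold iterates satisfy lim_{n→∞} (1/n)·F_μ^{∘n}(n z) = z + f(0). -/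
open Complex MeasureTheory Filter Topology

noncomputable section

/-- The Cauchy transform of a measure on ℝ. -/
def cauchyG (μ : Measure ℝ) (z : ℂ) : ℂ := ∫ x, (z - (x : ℂ))⁻¹ ∂μ

/-- The F-transform of a measure on ℝ. -/
def Ftrans (μ : Measure ℝ) (z : ℂ) : ℂ := (cauchyG μ z)⁻¹

/-- For `μ ∈ L` with `F_μ(z) = z + f(e^{iz})`, the `n`-fold iterates satisfy
`(1/n) F_μ^{∘n}(nz) → z + f(0)`: `μ` is in the monotone domain of attraction of the
Cauchy law. -/
theorem monotone_domain_of_attraction_Cauchy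
    (μ : Measure ℝ) [IsProbabilityMeasure μ]
    (hL : ∀ z ∈ UHP, Ftrans μ (z + 2 * Real.pi) = Ftrans μ z + 2 * Real.pi)
    (f : ℂ → ℂ) (hf : DifferentiableOn ℂ f uDisk)
    (hfim : ∀ w ∈ uDisk, 0 ≤ (f w).im)
    (hFf : ∀ z ∈ UHP, Ftrans μ z = z + f (Complex.exp (Complex.I * z))) :
    ∀ z ∈ UHP,
      Tendsto (fun n : ℕ => ((n : ℂ))⁻¹ * ((Ftrans μ)^[n] ((n : ℂ) * z)))
        atTop (nhds (z + f 0)) := by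
  intro z hz
  have ha0 : 0 < z.im := hz
  set a := z.im with ha
  rw [Metric.tendsto_atTop]
  intro ε hε
  -- continuity of f at 0
  have h0 : (0:ℂ) ∈ uDisk := by simp [uDisk]
  have hcont := hf.continuousOn 0 h0
  rw [Metric.continuousWithinAt_iff] at hcont
  obtain ⟨δ, hδ, hδ'⟩ := hcont (ε/2) (by linarith)
  have hev : ∀ᶠ n : ℕ in atTop, Real.exp (-((n:ℝ) * a)) < δ := by
    have h1 : Tendsto (fun n : ℕ => -((n:ℝ) * a)) atTop atBot := by
      apply Filter.tendsto_neg_atBot_iff.mpr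
      exact Tendsto.atTop_mul_const ha0 tendsto_natCast_atTop_atTop
    exact (Real.tendsto_exp_atBot.comp h1).eventually (gt_mem_nhds hδ)
  obtain ⟨N, hN⟩ := Filter.eventually_atTop.1 (hev.and (eventually_ge_atTop 1))
  refine ⟨N, fun n hn => ?_⟩
  obtain ⟨hexp, hn1⟩ := hN n hn
  have hn0 : (0:ℝ) < n := by exact_mod_cast hn1
  have key : ∀ m : ℕ, (n:ℝ) * a ≤ ((Ftrans μ)^[m] ((n:ℂ)*z)).im ∧
      ‖(Ftrans μ)^[m] ((n:ℂ)*z) - ((n:ℂ)*z + (m:ℂ) * f 0)‖ ≤ (m:ℝ) * (ε/2) := by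
    intro m
    induction m with
    | zero =>
      constructor
      · simp [Complex.mul_im, ha]
      · simp
    | succ m ih =>
      obtain ⟨him, habs⟩ := ih
      set w := (Ftrans μ)^[m] ((n:ℂ)*z) with hw
      have hwim : 0 < w.im := lt_of_lt_of_le (by positivity) him
      have hwU : w ∈ UHP := hwim
      have hit : (Ftrans μ)^[m+1] ((n:ℂ)*z) = Ftrans μ w := by
        rw [Function.iterate_succ_apply']
      have hF : Ftrans μ w = w + f (Complex.exp (Complex.I * w)) := hFf w hwU
      have he : ‖Complex.exp (Complex.I * w)‖ = Real.exp (-(w.im)) := by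
        rw [Complex.norm_exp]
        congr 1
        simp [Complex.mul_re]
      have heD : Complex.exp (Complex.I * w) ∈ uDisk := by
        rw [uDisk, Set.mem_setOf_eq, he]
        exact Real.exp_lt_one_iff.mpr (by linarith)
      have hesmall : ‖Complex.exp (Complex.I * w)‖ < δ := by
        rw [he]
        calc Real.exp (-(w.im)) ≤ Real.exp (-((n:ℝ)*a)) := Real.exp_le_exp.2 (by linarith)
        _ < δ := hexp
      have hfe : ‖f (Complex.exp (Complex.I*w)) - f 0‖ ≤ ε/2 := by
        have := hδ' heD (by simpa [Complex.dist_eq] using hesmall)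
        rw [Complex.dist_eq] at this
        exact this.le
      refine ⟨?_, ?_⟩
      · rw [hit, hF, Complex.add_im]
        have := hfim _ heD
        linarith
      · rw [hit, hF]
        have heq : w + f (Complex.exp (Complex.I*w)) - ((n:ℂ)*z + ((m+1 : ℕ):ℂ) * f 0)
            = (w - ((n:ℂ)*z + (m:ℂ) * f 0)) + (f (Complex.exp (Complex.I*w)) - f 0) := by
          push_cast; ring
        rw [heq]
        calc ‖_‖ ≤ _ + _ := norm_add_le _ _
        _ ≤ (m:ℝ) * (ε/2) + ε/2 := add_le_add habs hfe
        _ = ((m+1 : ℕ):ℝ) * (ε/2) := by push_cast; ring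
  obtain ⟨_, hbound⟩ := key n
  rw [Complex.dist_eq]
  have heq : ((n:ℂ))⁻¹ * ((Ftrans μ)^[n] ((n:ℂ)*z)) - (z + f 0)
      = ((n:ℂ))⁻¹ * ((Ftrans μ)^[n] ((n:ℂ)*z) - ((n:ℂ)*z + (n:ℂ) * f 0)) := by
    have hne : ((n:ℂ)) ≠ 0 := by exact_mod_cast hn0.ne'
    field_simp
  rw [heq, norm_mul, norm_inv, Complex.norm_natCast]
  calc ((n:ℝ))⁻¹ * ‖_‖ ≤ ((n:ℝ))⁻¹ * ((n:ℝ) * (ε/2)) := by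
        apply mul_le_mul_of_nonneg_left hbound (by positivity)
  _ = ε/2 := by field_simp
  _ < ε := by linarith

end
end

section
/- Let (μ_n) be a sequence of probability measures on ℝ, each with F-transform satisfying F_{μ_n}(z + 2π) = F_{μ_n}(z) + 2π for all z ∈ ℂ⁺, and suppose μ_n converges weakly to a probability measure μ. Then F_μ(z + 2π) = F_μ(z) + 2π for all z ∈ ℂ⁺, i.e., the class L is closed under weak limits. -/
open Complex MeasureTheory Filter Topology BoundedContinuousFunction

noncomputable section

/-- The class L: measures whose F-transform commutes with translation by 2π. -/
def inClassL (μ : Measure ℝ) : Prop :=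
  ∀ z ∈ UHP, Ftrans μ (z + 2 * Real.pi) = Ftrans μ z + 2 * Real.pi

lemma aux_sub_ne_zero {z : ℂ} (hz : 0 < z.im) (x : ℝ) : z - (x : ℂ) ≠ 0 := by
  intro h
  have h2 : (z - (x : ℂ)).im = 0 := by rw [h]; simp
  simp [Complex.sub_im] at h2
  linarith

lemma aux_cont {z : ℂ} (hz : 0 < z.im) :
    Continuous (fun x : ℝ => (z - (x : ℂ))⁻¹) :=
  (continuous_const.sub Complex.continuous_ofReal).inv₀ (fun x => aux_sub_ne_zero hz x)

lemma aux_norm_le {z : ℂ} (hz : 0 < z.im) (x : ℝ) : ‖(z - (x : ℂ))⁻¹‖ ≤ z.im⁻¹ := by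
  rw [norm_inv]
  apply inv_anti₀ hz
  calc z.im = (z - (x : ℂ)).im := by simp
    _ ≤ |(z - (x : ℂ)).im| := le_abs_self _
    _ ≤ ‖z - (x : ℂ)‖ := by exact Complex.abs_im_le_norm _

lemma aux_re_bound {z : ℂ} (hz : 0 < z.im) (x : ℝ) : ‖((z - (x : ℂ))⁻¹).re‖ ≤ z.im⁻¹ := by
  rw [Real.norm_eq_abs]
  calc |((z - (x : ℂ))⁻¹).re| ≤ ‖(z - (x : ℂ))⁻¹‖ := Complex.abs_re_le_norm _
    _ ≤ z.im⁻¹ := by exact aux_norm_le hz x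

lemma aux_im_bound {z : ℂ} (hz : 0 < z.im) (x : ℝ) : ‖((z - (x : ℂ))⁻¹).im‖ ≤ z.im⁻¹ := by
  rw [Real.norm_eq_abs]
  calc |((z - (x : ℂ))⁻¹).im| ≤ ‖(z - (x : ℂ))⁻¹‖ := Complex.abs_im_le_norm _
    _ ≤ z.im⁻¹ := by exact aux_norm_le hz x

lemma aux_integrable (μ : Measure ℝ) [IsProbabilityMeasure μ] {z : ℂ} (hz : 0 < z.im) :
    Integrable (fun x : ℝ => (z - (x : ℂ))⁻¹) μ :=
  (integrable_const (z.im⁻¹)).mono' (aux_cont hz).aestronglyMeasurable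
    (ae_of_all _ fun x => aux_norm_le hz x)

lemma aux_cauchyG_ne_zero (μ : Measure ℝ) [IsProbabilityMeasure μ] {z : ℂ} (hz : 0 < z.im) :
    cauchyG μ z ≠ 0 := by
  have him : (cauchyG μ z).im < 0 := by
    have hInt := aux_integrable μ hz
    have h1 : (cauchyG μ z).im = ∫ x, ((z - (x : ℂ))⁻¹).im ∂μ := by
      have := integral_im (𝕜 := ℂ) (μ := μ) (f := fun x : ℝ => (z - (x : ℂ))⁻¹) hInt
      simpa [cauchyG] using this.symm
    have h2 : ∀ x : ℝ, ((z - (x : ℂ))⁻¹).im = -(z.im / Complex.normSq (z - (x : ℂ))) := by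
      intro x
      rw [Complex.inv_im]
      simp [neg_div]
    have hg : Integrable (fun x : ℝ => z.im / Complex.normSq (z - (x : ℂ))) μ := by
      have := (hInt.im).neg
      refine this.congr (ae_of_all _ fun x => ?_)
      simp only [Pi.neg_apply, RCLike.im_to_complex, h2 x]
      ring
    have hpos : 0 < ∫ x, z.im / Complex.normSq (z - (x : ℂ)) ∂μ := by
      rw [integral_pos_iff_support_of_nonneg_ae _ hg]
      · have : Function.support (fun x : ℝ => z.im / Complex.normSq (z - (x : ℂ)))
            = Set.univ := by
          ext x
          simp only [Function.mem_support, Set.mem_univ, iff_true]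
          have hns : 0 < Complex.normSq (z - (x : ℂ)) :=
            Complex.normSq_pos.mpr (aux_sub_ne_zero hz x)
          positivity
        rw [this]
        simp
      · refine ae_of_all _ fun x => ?_
        have hns : 0 < Complex.normSq (z - (x : ℂ)) :=
          Complex.normSq_pos.mpr (aux_sub_ne_zero hz x)
        positivity
    have h3 : (cauchyG μ z).im = -∫ x, z.im / Complex.normSq (z - (x : ℂ)) ∂μ := by
      rw [h1, ← integral_neg]
      exact integral_congr_ae (ae_of_all _ fun x => by simpa using h2 x)
    rw [h3]
    linarith
  intro h
  rw [h] at him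
  simp at him

lemma aux_tendsto_cauchyG (μseq : ℕ → Measure ℝ) (hprob : ∀ n, IsProbabilityMeasure (μseq n))
    (μ : Measure ℝ) [IsProbabilityMeasure μ]
    (hweak : ∀ f : ℝ →ᵇ ℝ,
      Tendsto (fun n => ∫ x, f x ∂(μseq n)) atTop (nhds (∫ x, f x ∂μ)))
    {z : ℂ} (hz : 0 < z.im) :
    Tendsto (fun n => cauchyG (μseq n) z) atTop (nhds (cauchyG μ z)) := by
  set fre : ℝ →ᵇ ℝ := BoundedContinuousFunction.ofNormedAddCommGroup
    (fun x : ℝ => ((z - (x : ℂ))⁻¹).re) (Complex.continuous_re.comp (aux_cont hz)) (z.im⁻¹)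
    (fun x => aux_re_bound hz x) with hfre
  set fim : ℝ →ᵇ ℝ := BoundedContinuousFunction.ofNormedAddCommGroup
    (fun x : ℝ => ((z - (x : ℂ))⁻¹).im) (Complex.continuous_im.comp (aux_cont hz)) (z.im⁻¹)
    (fun x => aux_im_bound hz x) with hfim
  have key : ∀ (ν : Measure ℝ) [IsProbabilityMeasure ν],
      cauchyG ν z = (∫ x, fre x ∂ν : ℝ) + (∫ x, fim x ∂ν : ℝ) * Complex.I := by
    intro ν hν
    have hInt := aux_integrable ν hz
    have hre : (∫ x, fre x ∂ν : ℝ) = (cauchyG ν z).re := by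
      have := integral_re (𝕜 := ℂ) (μ := ν) (f := fun x : ℝ => (z - (x : ℂ))⁻¹) hInt
      simpa [cauchyG, hfre] using this
    have him : (∫ x, fim x ∂ν : ℝ) = (cauchyG ν z).im := by
      have := integral_im (𝕜 := ℂ) (μ := ν) (f := fun x : ℝ => (z - (x : ℂ))⁻¹) hInt
      simpa [cauchyG, hfim] using this
    rw [hre, him, Complex.re_add_im]
  have h1 := hweak fre
  have h2 := hweak fim
  have h3 : Tendsto (fun n => ((∫ x, fre x ∂(μseq n) : ℝ) : ℂ)
      + ((∫ x, fim x ∂(μseq n) : ℝ) : ℂ) * Complex.I) atTop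
      (nhds (((∫ x, fre x ∂μ : ℝ) : ℂ) + ((∫ x, fim x ∂μ : ℝ) : ℂ) * Complex.I)) := by
    exact ((Complex.continuous_ofReal.tendsto _).comp h1).add
      (((Complex.continuous_ofReal.tendsto _).comp h2).mul_const Complex.I)
  have heq : (fun n => cauchyG (μseq n) z)
      = fun n => ((∫ x, fre x ∂(μseq n) : ℝ) : ℂ)
        + ((∫ x, fim x ∂(μseq n) : ℝ) : ℂ) * Complex.I := by
    funext n
    have := hprob n
    exact key (μseq n)
  rw [heq, key μ]
  exact h3

/-- The class `L` is closed under weak limits. -/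
theorem classL_closed_under_weak_limits
    (μseq : ℕ → Measure ℝ) (hprob : ∀ n, IsProbabilityMeasure (μseq n))
    (hLn : ∀ n, inClassL (μseq n))
    (μ : Measure ℝ) [IsProbabilityMeasure μ]
    (hweak : ∀ f : ℝ →ᵇ ℝ,
      Tendsto (fun n => ∫ x, f x ∂(μseq n)) atTop (nhds (∫ x, f x ∂μ))) :
    inClassL μ := by
  intro z hz
  have hz' : 0 < z.im := hz
  have hz2 : 0 < (z + 2 * Real.pi).im := by
    simpa using hz'
  have hF1 : Tendsto (fun n => Ftrans (μseq n) z) atTop (nhds (Ftrans μ z)) :=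
    (aux_tendsto_cauchyG μseq hprob μ hweak hz').inv₀ (aux_cauchyG_ne_zero μ hz')
  have hF2 : Tendsto (fun n => Ftrans (μseq n) (z + 2 * Real.pi)) atTop
      (nhds (Ftrans μ (z + 2 * Real.pi))) :=
    (aux_tendsto_cauchyG μseq hprob μ hweak hz2).inv₀ (aux_cauchyG_ne_zero μ hz2)
  have heq : (fun n => Ftrans (μseq n) (z + 2 * Real.pi))
      = fun n => Ftrans (μseq n) z + 2 * Real.pi :=
    funext fun n => hLn n z hz
  rw [heq] at hF2
  have hF3 : Tendsto (fun n => Ftrans (μseq n) z + (2 * Real.pi : ℂ)) atTop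
      (nhds (Ftrans μ z + 2 * Real.pi)) := hF1.add_const _
  exact tendsto_nhds_unique hF2 hF3

end
end

section
/- Let F : ℂ⁺ → ℂ⁺ be analytic with F(z + 2π) = F(z) + 2π for all z ∈ ℂ⁺. Then there exists a unique analytic function η on the open unit disk 𝔻 such that η(exp(iz)) = exp(i·F(z)) for all z ∈ ℂ⁺. Moreover, η maps 𝔻 into 𝔻, satisfies |η(w)| ≤ |w| for all w ∈ 𝔻, η′(0) ≠ 0, and for w ∈ 𝔻 one has η(w) = 0 if and only if w = 0. -/
open Complex MeasureTheory Filter Topology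

noncomputable section

namespace ClassLAux

open Function Metric Set

lemma isOpen_UHP : IsOpen UHP := isOpen_lt continuous_const Complex.continuous_im

lemma two_pi_pos' : (0:ℝ) < 2 * Real.pi := by positivity

lemma two_pi_ne : (2 * Real.pi : ℝ) ≠ 0 := ne_of_gt two_pi_pos'

lemma two_pi_C_ne : ((2 * Real.pi : ℝ) : ℂ) ≠ 0 := by
  exact_mod_cast two_pi_ne

lemma mem_UHP_iff {z : ℂ} : z ∈ UHP ↔ 0 < z.im := Iff.rfl

variable {F : ℂ → ℂ}

lemma per_nat (hp : ∀ z ∈ UHP, F (z + 2 * Real.pi) = F z + 2 * Real.pi) :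
    ∀ n : ℕ, ∀ z ∈ UHP, F (z + ((n * (2 * Real.pi) : ℝ) : ℂ)) = F z + ((n * (2 * Real.pi) : ℝ) : ℂ) := by
  intro n
  induction n with
  | zero => intro z hz; simp
  | succ k ih =>
    intro z hz
    have hz' : z + ((k * (2 * Real.pi) : ℝ) : ℂ) ∈ UHP := by
      rw [mem_UHP_iff]; simpa [mem_UHP_iff] using hz
    have h1 := hp _ hz'
    have h2 := ih z hz
    have he : z + (((k + 1 : ℕ) * (2 * Real.pi) : ℝ) : ℂ)
        = z + ((k * (2 * Real.pi) : ℝ) : ℂ) + 2 * Real.pi := by push_cast; ring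
    rw [he, h1, h2]; push_cast; ring

/-- Reduction of a complex number mod 2π (on the real part). -/
def red (z : ℂ) : ℂ := z - (⌊z.re / (2 * Real.pi)⌋ : ℤ) * ((2 * Real.pi : ℝ) : ℂ)

lemma red_im (z : ℂ) : (red z).im = z.im := by
  simp [red]

lemma red_mem {z : ℂ} (hz : z ∈ UHP) : red z ∈ UHP := by
  rw [mem_UHP_iff, red_im]; exact hz

lemma red_add (z : ℂ) : red (z + ((2 * Real.pi : ℝ) : ℂ)) = red z := by
  have hre : (z + ((2 * Real.pi : ℝ) : ℂ)).re = z.re + 2 * Real.pi := by simp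
  have hfl : ⌊(z.re + 2 * Real.pi) / (2 * Real.pi)⌋ = ⌊z.re / (2 * Real.pi)⌋ + 1 := by
    rw [add_div, div_self two_pi_ne, Int.floor_add_one]
  rw [red, red, hre, hfl]
  push_cast; ring

lemma F_red (hp : ∀ z ∈ UHP, F (z + 2 * Real.pi) = F z + 2 * Real.pi) {z : ℂ} (hz : z ∈ UHP) :
    F (red z) = F z - (⌊z.re / (2 * Real.pi)⌋ : ℤ) * ((2 * Real.pi : ℝ) : ℂ) := by
  set m : ℤ := ⌊z.re / (2 * Real.pi)⌋ with hm
  rcases le_or_gt 0 m with h | h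
  · obtain ⟨n, hmn⟩ := Int.eq_ofNat_of_zero_le h
    have h1 := per_nat hp n (red z) (red_mem hz)
    have hnm : ((n:ℕ) : ℂ) = (m : ℂ) := by exact_mod_cast congrArg (fun k : ℤ => (k : ℂ)) hmn.symm
    have harg : red z + ((n * (2 * Real.pi) : ℝ) : ℂ) = z := by
      rw [red, ← hm]; push_cast; push_cast at hnm
      linear_combination (2 * (Real.pi:ℂ)) * hnm
    rw [harg] at h1
    have : F (red z) = F z - ((n * (2 * Real.pi) : ℝ) : ℂ) := by linear_combination -h1
    rw [this]; push_cast; push_cast at hnm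
    linear_combination -(2 * (Real.pi:ℂ)) * hnm
  · obtain ⟨n, hn⟩ := Int.eq_ofNat_of_zero_le (by omega : (0:ℤ) ≤ -m)
    have h1 := per_nat hp n z hz
    have hnm : ((n:ℕ) : ℂ) = -(m : ℂ) := by
      have h2 : ((-m : ℤ) : ℂ) = (((n:ℕ) : ℤ) : ℂ) := by rw [hn]
      push_cast at h2; linear_combination -h2
    have harg : z + ((n * (2 * Real.pi) : ℝ) : ℂ) = red z := by
      rw [red, ← hm]; push_cast
      push_cast at hnm
      linear_combination (2 * (Real.pi:ℂ)) * hnm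
    rw [harg] at h1
    have : F (red z) = F z + ((n * (2 * Real.pi) : ℝ) : ℂ) := h1
    rw [this]; push_cast
    linear_combination (2 * (Real.pi:ℂ)) * hnm

/-- Periodized version of `exp (I * F z)`. -/
def fAux (F : ℂ → ℂ) : ℂ → ℂ := fun z => Complex.exp (Complex.I * F (red z))

/-- Periodized version of `exp (I * (F z - z))`. -/
def gAux (F : ℂ → ℂ) : ℂ → ℂ := fun z => fAux F z * Complex.exp (-(Complex.I * z))

lemma exp_two_pi_I : Complex.exp (((2 * Real.pi : ℝ) : ℂ) * Complex.I) = 1 := by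
  have := Complex.exp_int_mul_two_pi_mul_I 1
  push_cast at this ⊢
  rw [show (2 * (Real.pi:ℂ)) * Complex.I = (1:ℂ) * (2 * Real.pi * Complex.I) by ring]
  exact this

lemma fAux_periodic : Function.Periodic (fAux F) ((2 * Real.pi : ℝ) : ℂ) := by
  intro z
  simp only [fAux, red_add]

lemma gAux_periodic : Function.Periodic (gAux F) ((2 * Real.pi : ℝ) : ℂ) := by
  intro z
  simp only [gAux, fAux_periodic z]
  congr 1
  rw [show -(Complex.I * (z + ((2 * Real.pi : ℝ) : ℂ))) =
    -(Complex.I * z) + (-1 : ℤ) * (2 * (Real.pi : ℂ) * Complex.I) by push_cast; ring,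
    Complex.exp_add, Complex.exp_int_mul_two_pi_mul_I, mul_one]

lemma fAux_eq (hp : ∀ z ∈ UHP, F (z + 2 * Real.pi) = F z + 2 * Real.pi) {z : ℂ} (hz : z ∈ UHP) :
    fAux F z = Complex.exp (Complex.I * F z) := by
  rw [fAux, F_red hp hz, mul_sub, Complex.exp_sub]
  have h1 : Complex.exp (Complex.I * ((⌊z.re / (2 * Real.pi)⌋ : ℤ) * ((2 * Real.pi : ℝ) : ℂ))) = 1 := by
    have := Complex.exp_int_mul_two_pi_mul_I ⌊z.re / (2 * Real.pi)⌋
    rw [show Complex.I * ((⌊z.re / (2 * Real.pi)⌋ : ℤ) * ((2 * Real.pi : ℝ) : ℂ)) =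
      (⌊z.re / (2 * Real.pi)⌋ : ℤ) * (2 * (Real.pi : ℂ) * Complex.I) by push_cast; ring]
    exact this
  rw [h1, div_one]

lemma gAux_eq (hp : ∀ z ∈ UHP, F (z + 2 * Real.pi) = F z + 2 * Real.pi) {z : ℂ} (hz : z ∈ UHP) :
    gAux F z = Complex.exp (Complex.I * (F z - z)) := by
  rw [gAux, fAux_eq hp hz, ← Complex.exp_add]
  congr 1
  ring

lemma fAux_diff (hd : DifferentiableOn ℂ F UHP)
    (hp : ∀ z ∈ UHP, F (z + 2 * Real.pi) = F z + 2 * Real.pi) {z : ℂ} (hz : z ∈ UHP) :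
    DifferentiableAt ℂ (fAux F) z := by
  have h2 : DifferentiableAt ℂ F z := hd.differentiableAt (isOpen_UHP.mem_nhds hz)
  have h1 : DifferentiableAt ℂ (fun w => Complex.exp (Complex.I * F w)) z :=
    (h2.const_mul Complex.I).cexp
  apply h1.congr_of_eventuallyEq
  filter_upwards [isOpen_UHP.mem_nhds hz] with w hw
  exact fAux_eq hp hw

lemma gAux_diff (hd : DifferentiableOn ℂ F UHP)
    (hp : ∀ z ∈ UHP, F (z + 2 * Real.pi) = F z + 2 * Real.pi) {z : ℂ} (hz : z ∈ UHP) :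
    DifferentiableAt ℂ (gAux F) z :=
  (fAux_diff hd hp hz).mul ((differentiableAt_id.const_mul Complex.I).neg.cexp)

lemma qParam_eq (z : ℂ) : Function.Periodic.qParam (2 * Real.pi) z = Complex.exp (Complex.I * z) := by
  rw [Function.Periodic.qParam]
  congr 1
  rw [div_eq_iff two_pi_C_ne]
  push_cast; ring

/-- The η function: cusp function attached to `exp (I F z)`. -/
def etaA (F : ℂ → ℂ) : ℂ → ℂ := Function.Periodic.cuspFunction (2 * Real.pi) (fAux F)

/-- The ζ function: cusp function attached to `exp (I (F z - z))`. -/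
def zetaA (F : ℂ → ℂ) : ℂ → ℂ := Function.Periodic.cuspFunction (2 * Real.pi) (gAux F)

lemma eta_val (hp : ∀ z ∈ UHP, F (z + 2 * Real.pi) = F z + 2 * Real.pi) {z : ℂ} (hz : z ∈ UHP) :
    etaA F (Complex.exp (Complex.I * z)) = Complex.exp (Complex.I * F z) := by
  rw [← qParam_eq, etaA, Function.Periodic.eq_cuspFunction two_pi_ne fAux_periodic z,
    fAux_eq hp hz]

lemma zeta_val (hp : ∀ z ∈ UHP, F (z + 2 * Real.pi) = F z + 2 * Real.pi) {z : ℂ} (hz : z ∈ UHP) :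
    zetaA F (Complex.exp (Complex.I * z)) = Complex.exp (Complex.I * (F z - z)) := by
  rw [← qParam_eq, zetaA, Function.Periodic.eq_cuspFunction two_pi_ne gAux_periodic z,
    gAux_eq hp hz]

lemma exists_z {w : ℂ} (hw : ‖w‖ < 1) (hw0 : w ≠ 0) :
    ∃ z ∈ UHP, Complex.exp (Complex.I * z) = w := by
  refine ⟨Function.Periodic.invQParam (2 * Real.pi) w, ?_, ?_⟩
  · exact Function.Periodic.im_invQParam_pos_of_norm_lt_one two_pi_pos' hw hw0
  · rw [← qParam_eq, Function.Periodic.qParam_right_inv two_pi_ne hw0]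

lemma eta_eq_mul (hp : ∀ z ∈ UHP, F (z + 2 * Real.pi) = F z + 2 * Real.pi) {w : ℂ}
    (hw : ‖w‖ < 1) (hw0 : w ≠ 0) : etaA F w = w * zetaA F w := by
  obtain ⟨z, hz, rfl⟩ := exists_z hw hw0
  rw [eta_val hp hz, zeta_val hp hz, ← Complex.exp_add]
  congr 1; ring

lemma zeta_ne (hp : ∀ z ∈ UHP, F (z + 2 * Real.pi) = F z + 2 * Real.pi) {w : ℂ}
    (hw : ‖w‖ < 1) (hw0 : w ≠ 0) : zetaA F w ≠ 0 := by
  obtain ⟨z, hz, rfl⟩ := exists_z hw hw0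
  rw [zeta_val hp hz]
  exact Complex.exp_ne_zero _

lemma eta_abs_lt (hm : Set.MapsTo F UHP UHP)
    (hp : ∀ z ∈ UHP, F (z + 2 * Real.pi) = F z + 2 * Real.pi) {w : ℂ}
    (hw : ‖w‖ < 1) (hw0 : w ≠ 0) : ‖etaA F w‖ < 1 := by
  obtain ⟨z, hz, rfl⟩ := exists_z hw hw0
  rw [eta_val hp hz, Complex.norm_exp]
  rw [Real.exp_lt_one_iff]
  have : (Complex.I * F z).re = -(F z).im := by simp
  rw [this, neg_lt_zero]
  exact hm hz

lemma eta_diff (hd : DifferentiableOn ℂ F UHP) (hm : Set.MapsTo F UHP UHP)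
    (hp : ∀ z ∈ UHP, F (z + 2 * Real.pi) = F z + 2 * Real.pi) {w : ℂ}
    (hw : ‖w‖ < 1) : DifferentiableAt ℂ (etaA F) w := by
  rcases eq_or_ne w 0 with rfl | hw0
  · apply Function.Periodic.differentiableAt_cuspFunction_zero two_pi_pos' fAux_periodic
    · refine eventually_of_mem (preimage_mem_comap (Ioi_mem_atTop 0)) (fun z hz => ?_)
      exact fAux_diff hd hp (by exact hz : z ∈ UHP)
    · refine Asymptotics.IsBigO.of_bound 1 ?_
      refine eventually_of_mem (preimage_mem_comap (Ioi_mem_atTop 0)) (fun z hz => ?_)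
      have hz' : z ∈ UHP := hz
      have h1 : ‖fAux F z‖ ≤ 1 := by
        rw [fAux, Complex.norm_exp]
        have : (Complex.I * F (red z)).re = -(F (red z)).im := by simp
        rw [this]
        have := hm (red_mem hz')
        rw [Real.exp_le_one_iff, neg_nonpos]
        exact le_of_lt this
      simpa using h1
  · rw [← Function.Periodic.qParam_right_inv two_pi_ne hw0]
    apply Function.Periodic.differentiableAt_cuspFunction two_pi_ne fAux_periodic
    exact fAux_diff hd hp
      (Function.Periodic.im_invQParam_pos_of_norm_lt_one two_pi_pos' hw hw0)

lemma zeta_diff (hd : DifferentiableOn ℂ F UHP)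
    (hp : ∀ z ∈ UHP, F (z + 2 * Real.pi) = F z + 2 * Real.pi) {w : ℂ}
    (hw : ‖w‖ < 1) (hw0 : w ≠ 0) : DifferentiableAt ℂ (zetaA F) w := by
  rw [← Function.Periodic.qParam_right_inv two_pi_ne hw0]
  apply Function.Periodic.differentiableAt_cuspFunction two_pi_ne gAux_periodic
  exact gAux_diff hd hp
    (Function.Periodic.im_invQParam_pos_of_norm_lt_one two_pi_pos' hw hw0)


lemma integral_log_deriv_zero (hd : DifferentiableOn ℂ F UHP)
    (hp : ∀ z ∈ UHP, F (z + 2 * Real.pi) = F z + 2 * Real.pi)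
    {r : ℝ} (hr0 : 0 < r) (hr1 : r < 1) :
    (∮ w in C(0, r), deriv (zetaA F) w / zetaA F w) = 0 := by
  set y : ℝ := -Real.log r with hy_def
  have hy : 0 < y := by
    have := Real.log_neg hr0 hr1
    simp only [hy_def]; linarith
  set ψ : ℝ → ℂ := fun θ => (θ : ℂ) + (y : ℂ) * Complex.I with hψ_def
  have hψim : ∀ θ : ℝ, (ψ θ).im = y := by intro θ; simp [hψ_def]
  have hψUHP : ∀ θ : ℝ, ψ θ ∈ UHP := by
    intro θ; rw [mem_UHP_iff, hψim]; exact hy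
  have hcirc : ∀ θ : ℝ, circleMap 0 r θ = Complex.exp (Complex.I * ψ θ) := by
    intro θ
    have h1 : Complex.I * ψ θ = ((Real.log r : ℝ) : ℂ) + (θ : ℂ) * Complex.I := by
      simp only [hψ_def]
      have : ((y:ℝ) : ℂ) = -((Real.log r : ℝ) : ℂ) := by rw [hy_def]; push_cast; ring
      rw [this]; ring_nf
      rw [Complex.I_sq]; ring
    rw [h1, Complex.exp_add]
    have h2 : Complex.exp ((Real.log r : ℝ) : ℂ) = (r : ℂ) := by
      rw [← Complex.ofReal_exp, Real.exp_log hr0]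
    rw [h2]
    simp [circleMap]
  have habs : ∀ θ : ℝ, ‖circleMap 0 r θ‖ < 1 := by
    intro θ; rw [norm_circleMap_zero, abs_of_pos hr0]; exact hr1
  have hne0 : ∀ θ : ℝ, circleMap 0 r θ ≠ 0 := fun θ => circleMap_ne_center (ne_of_gt hr0)
  -- derivatives
  have hFd : ∀ θ : ℝ, HasDerivAt (fun t : ℝ => F (ψ t)) (deriv F (ψ θ)) θ := by
    intro θ
    have h2 : DifferentiableAt ℂ F (ψ θ) := hd.differentiableAt (isOpen_UHP.mem_nhds (hψUHP θ))
    have h3 : HasDerivAt (fun w : ℂ => w + (y : ℂ) * Complex.I) 1 (θ : ℂ) :=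
      (hasDerivAt_id _).add_const _
    have h4 : HasDerivAt (fun w : ℂ => F (w + (y : ℂ) * Complex.I)) (deriv F (ψ θ)) (θ : ℂ) := by
      have := (h2.hasDerivAt.comp (θ : ℂ) h3)
      rw [mul_one] at this; exact this
    exact h4.comp_ofReal
  have hψd : ∀ θ : ℝ, HasDerivAt ψ 1 θ := by
    intro θ
    exact ((hasDerivAt_id ((θ : ℝ) : ℂ)).add_const ((y : ℂ) * Complex.I)).comp_ofReal
  have hBd : ∀ θ : ℝ, HasDerivAt (fun t : ℝ => Complex.I * (F (ψ t) - ψ t))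
      (Complex.I * (deriv F (ψ θ) - 1)) θ := by
    intro θ
    exact ((hFd θ).sub (hψd θ)).const_mul Complex.I
  have hEd : ∀ θ : ℝ, HasDerivAt (fun t : ℝ => Complex.exp (Complex.I * (F (ψ t) - ψ t)))
      (Complex.exp (Complex.I * (F (ψ θ) - ψ θ)) * (Complex.I * (deriv F (ψ θ) - 1))) θ := by
    intro θ
    exact (hBd θ).cexp
  have hcd : ∀ θ : ℝ, HasDerivAt (fun t : ℝ => Complex.exp (Complex.I * ψ t))
      (Complex.exp (Complex.I * ψ θ) * Complex.I) θ := by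
    intro θ
    have h3 : HasDerivAt (fun w : ℂ => Complex.I * (w + (y : ℂ) * Complex.I)) Complex.I (θ : ℂ) := by
      simpa using ((hasDerivAt_id ((θ:ℝ) : ℂ)).add_const ((y : ℂ) * Complex.I)).const_mul Complex.I
    have h4 := (Complex.hasDerivAt_exp (Complex.I * ψ θ)).comp ((θ:ℝ) : ℂ) h3
    exact h4.comp_ofReal
  have hzval : ∀ θ : ℝ, zetaA F (circleMap 0 r θ) = Complex.exp (Complex.I * (F (ψ θ) - ψ θ)) := by
    intro θ; rw [hcirc θ]; exact zeta_val hp (hψUHP θ)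
  have hzd : ∀ θ : ℝ, HasDerivAt (fun t : ℝ => zetaA F (Complex.exp (Complex.I * ψ t)))
      (deriv (zetaA F) (circleMap 0 r θ) * (Complex.exp (Complex.I * ψ θ) * Complex.I)) θ := by
    intro θ
    have hw : DifferentiableAt ℂ (zetaA F) (circleMap 0 r θ) :=
      zeta_diff hd hp (habs θ) (hne0 θ)
    rw [hcirc θ] at hw
    have := hw.hasDerivAt.comp θ (hcd θ)
    rw [← hcirc θ] at this ⊢
    exact this
  have hkey : ∀ θ : ℝ, deriv (circleMap 0 r) θ •
      (deriv (zetaA F) (circleMap 0 r θ) / zetaA F (circleMap 0 r θ))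
      = Complex.I * (deriv F (ψ θ) - 1) := by
    intro θ
    have he : (fun t : ℝ => zetaA F (Complex.exp (Complex.I * ψ t)))
        = fun t : ℝ => Complex.exp (Complex.I * (F (ψ t) - ψ t)) := by
      funext t; rw [← hcirc t]; exact hzval t
    have D := hzd θ
    rw [he] at D
    have huniq := D.unique (hEd θ)
    rw [hcirc θ] at huniq
    rw [deriv_circleMap, smul_eq_mul, hzval θ, hcirc θ]
    have hE : Complex.exp (Complex.I * (F (ψ θ) - ψ θ)) ≠ 0 := Complex.exp_ne_zero _
    field_simp
    linear_combination (-Complex.I) * huniq + (cexp (Complex.I * ψ θ) * deriv (zetaA F) (cexp (Complex.I * ψ θ)) - cexp (Complex.I * (F (ψ θ) - ψ θ)) * (deriv F (ψ θ) - 1)) * Complex.I_sq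
  have hcont : Continuous fun θ : ℝ => Complex.I * (deriv F (ψ θ) - 1) := by
    have h1 : ContinuousOn (deriv F) UHP := ((hd.analyticOnNhd isOpen_UHP).deriv).continuousOn
    have hψc : Continuous ψ := by
      simp only [hψ_def]; exact (Complex.continuous_ofReal).add continuous_const
    have h2 : Continuous fun θ : ℝ => deriv F (ψ θ) :=
      h1.comp_continuous hψc hψUHP
    exact continuous_const.mul (h2.sub continuous_const)
  have hcalc : (∮ w in C(0, r), deriv (zetaA F) w / zetaA F w)
      = ∫ θ in (0:ℝ)..(2 * Real.pi), Complex.I * (deriv F (ψ θ) - 1) := by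
    rw [circleIntegral]
    exact intervalIntegral.integral_congr fun θ _ => hkey θ
  rw [hcalc,
    intervalIntegral.integral_eq_sub_of_hasDerivAt (fun θ _ => hBd θ) (hcont.intervalIntegrable _ _)]
  have h2π : ψ (2 * Real.pi) = ψ 0 + 2 * Real.pi := by
    simp only [hψ_def]; push_cast; ring
  rw [h2π, hp (ψ 0) (hψUHP 0)]
  ring


end ClassLAux

open ClassLAux Metric

/-- For an analytic self-map `F` of ℂ⁺ with `F(z+2π)=F(z)+2π`, there is a unique
analytic `η` on the disk with `η(e^{iz}) = e^{iF(z)}`; moreover `η` maps 𝔻 to 𝔻,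
`|η(w)| ≤ |w|`, `η′(0) ≠ 0`, and `η` vanishes only at `0`. -/
theorem exists_unique_eta_of_classL
    (F : ℂ → ℂ)
    (hd : DifferentiableOn ℂ F UHP) (hm : Set.MapsTo F UHP UHP)
    (hp : ∀ z ∈ UHP, F (z + 2 * Real.pi) = F z + 2 * Real.pi) :
    ∃ η : ℂ → ℂ,
      DifferentiableOn ℂ η uDisk ∧
      (∀ z ∈ UHP, η (Complex.exp (Complex.I * z)) = Complex.exp (Complex.I * F z)) ∧
      Set.MapsTo η uDisk uDisk ∧
      (∀ w ∈ uDisk, ‖η w‖ ≤ ‖w‖) ∧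
      deriv η 0 ≠ 0 ∧
      (∀ w ∈ uDisk, (η w = 0 ↔ w = 0)) ∧
      (∀ η' : ℂ → ℂ, DifferentiableOn ℂ η' uDisk →
        (∀ z ∈ UHP, η' (Complex.exp (Complex.I * z)) = Complex.exp (Complex.I * F z)) →
        ∀ w ∈ uDisk, η' w = η w) := by
  classical
  have hmemD : ∀ w : ℂ, w ∈ uDisk ↔ ‖w‖ < 1 := fun w => Iff.rfl
  have huDisk : uDisk = Metric.ball (0:ℂ) 1 := by
    ext w; simp [uDisk, Metric.mem_ball, Complex.dist_eq]
  set η := etaA F with hη_def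
  have hdiff : ∀ w ∈ uDisk, DifferentiableAt ℂ η w := fun w hw => eta_diff hd hm hp hw
  have hDOn : DifferentiableOn ℂ η uDisk := fun w hw => (hdiff w hw).differentiableWithinAt
  have hval : ∀ z ∈ UHP, η (Complex.exp (Complex.I * z)) = Complex.exp (Complex.I * F z) :=
    fun z hz => eta_val hp hz
  have h0mem : (0:ℂ) ∈ uDisk := by rw [hmemD]; simp
  have hopen : IsOpen uDisk := by rw [huDisk]; exact Metric.isOpen_ball
  have hAn : AnalyticAt ℂ η 0 := DifferentiableOn.analyticAt hDOn (hopen.mem_nhds h0mem)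
  have habs_ev : ∀ᶠ w in 𝓝 (0:ℂ), ‖w‖ < 1 := by
    filter_upwards [hopen.mem_nhds h0mem] with w hw
    exact (hmemD w).mp hw
  -- the order of η at 0 is finite
  have hne_top : analyticOrderAt η 0 ≠ ⊤ := by
    intro htop
    have hev := (analyticOrderAt_eq_top).mp htop
    have h1 : ∀ᶠ w in 𝓝[≠] (0:ℂ), η w = 0 := hev.filter_mono nhdsWithin_le_nhds
    have h2 : ∀ᶠ w in 𝓝[≠] (0:ℂ), η w ≠ 0 := by
      filter_upwards [eventually_mem_nhdsWithin, habs_ev.filter_mono nhdsWithin_le_nhds]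
        with w hw0 hw1
      have hw0' : w ≠ 0 := by simpa using hw0
      rw [hη_def, eta_eq_mul hp hw1 hw0']
      exact mul_ne_zero hw0' (zeta_ne hp hw1 hw0')
    obtain ⟨w, hw1, hw2⟩ := (h1.and h2).exists
    exact hw2 hw1
  obtain ⟨m, hmord⟩ := ENat.ne_top_iff_exists.mp hne_top
  obtain ⟨u, hu_an, hu0, hu_ev⟩ := (hAn.analyticOrderAt_eq_natCast (n := m)).mp hmord.symm
  have hu_ev0 : ∀ᶠ w in 𝓝 (0:ℂ), η w = w ^ m * u w := by
    filter_upwards [hu_ev] with v hv; simpa using hv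
  have hu_ne : ∀ᶠ w in 𝓝 (0:ℂ), u w ≠ 0 := hu_an.continuousAt.eventually_ne hu0
  have hcomb : ∀ᶠ w in 𝓝 (0:ℂ),
      (η w = w ^ m * u w ∧ u w ≠ 0) ∧ (AnalyticAt ℂ u w ∧ ‖w‖ < 1) := by
    filter_upwards [hu_ev0, hu_ne, hu_an.eventually_analyticAt, habs_ev] with w h1 h2 h3 h4
    exact ⟨⟨h1, h2⟩, h3, h4⟩
  obtain ⟨ρ, hρ0, hρ⟩ := Metric.eventually_nhds_iff_ball.mp hcomb
  set r : ℝ := min ρ 1 / 2 with hr_def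
  have hr0 : 0 < r := by simp only [hr_def]; positivity
  have hrρ : r < ρ := by
    have h1 : min ρ 1 ≤ ρ := min_le_left _ _
    simp only [hr_def]; linarith
  have hr1 : r < 1 := by
    have h1 : min ρ 1 ≤ 1 := min_le_right _ _
    simp only [hr_def]; linarith
  set k : ℤ := (m : ℤ) - 1 with hk_def
  -- ζ equals w^k * u w on the punctured ball of radius ρ
  have hball_sub : ∀ v : ℂ, v ∈ ball (0:ℂ) ρ → v ≠ 0 → zetaA F v = v ^ k * u v := by
    intro v hv hv0
    have h1 : η v = v ^ m * u v := (hρ v hv).1.1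
    have habs1 : ‖v‖ < 1 := (hρ v hv).2.2
    have h2 : η v = v * zetaA F v := eta_eq_mul hp habs1 hv0
    have h3 : v * zetaA F v = v ^ m * u v := by rw [← h2, h1]
    have h4 : zetaA F v = v ^ (m:ℤ) * u v / v := by
      rw [eq_div_iff hv0, zpow_natCast]
      linear_combination h3
    rw [h4, hk_def, zpow_sub_one₀ hv0]
    field_simp
  have hAnBall : AnalyticOnNhd ℂ u (ball (0:ℂ) ρ) := fun v hv => (hρ v hv).2.1
  have hderivu : AnalyticOnNhd ℂ (deriv u) (ball (0:ℂ) ρ) := hAnBall.deriv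
  have hsph_ball : ∀ w : ℂ, w ∈ sphere (0:ℂ) r → w ∈ ball (0:ℂ) ρ ∧ w ≠ 0 := by
    intro w hw
    have h1 : ‖w‖ = r := by
      rw [mem_sphere_iff_norm, sub_zero] at hw; exact hw
    constructor
    · rw [mem_ball_zero_iff]; rw [h1]; exact hrρ
    · intro h; rw [h] at h1; simp at h1; exact absurd h1.symm (ne_of_gt hr0)
  -- the log-derivative of ζ on the sphere
  have hζd : ∀ w ∈ sphere (0:ℂ) r,
      deriv (zetaA F) w / zetaA F w = (k:ℂ) * w⁻¹ + deriv u w / u w := by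
    intro w hw
    obtain ⟨hball, hw0⟩ := hsph_ball w hw
    have hud : DifferentiableAt ℂ u w := ((hρ w hball).2.1).differentiableAt
    have h1 : HasDerivAt (fun v : ℂ => v ^ k * u v)
        (((k:ℂ) * w ^ (k-1)) * u w + w ^ k * deriv u w) w :=
      (hasDerivAt_zpow k w (Or.inl hw0)).mul hud.hasDerivAt
    have hopen2 : IsOpen (ball (0:ℂ) ρ \ {0}) := Metric.isOpen_ball.sdiff isClosed_singleton
    have hev : zetaA F =ᶠ[𝓝 w] fun v : ℂ => v ^ k * u v := by
      filter_upwards [hopen2.mem_nhds ⟨hball, hw0⟩] with v hv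
      exact hball_sub v hv.1 hv.2
    have h2 : HasDerivAt (zetaA F) (((k:ℂ) * w ^ (k-1)) * u w + w ^ k * deriv u w) w :=
      h1.congr_of_eventuallyEq hev
    rw [h2.deriv, hball_sub w hball hw0]
    have hu_ne' : u w ≠ 0 := (hρ w hball).1.2
    have hwk : w ^ k ≠ 0 := zpow_ne_zero k hw0
    rw [zpow_sub_one₀ hw0]
    field_simp
  -- the two integral computations force k = 0
  have hI1 : (∮ w in C(0, r), deriv (zetaA F) w / zetaA F w) = 0 :=
    integral_log_deriv_zero hd hp hr0 hr1
  have hcont_u : ContinuousOn (fun w : ℂ => deriv u w / u w) (ball (0:ℂ) ρ) := by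
    apply ContinuousOn.div
    · exact hderivu.continuousOn
    · exact hAnBall.continuousOn
    · exact fun v hv => (hρ v hv).1.2
  have hcont_sphere : ContinuousOn (fun w : ℂ => deriv (zetaA F) w / zetaA F w)
      (sphere (0:ℂ) r) := by
    have hrhs : ContinuousOn (fun w : ℂ => (k:ℂ) * w⁻¹ + deriv u w / u w) (sphere (0:ℂ) r) := by
      apply ContinuousOn.add
      · exact continuousOn_const.mul (ContinuousOn.inv₀ continuousOn_id
          (fun w hw => (hsph_ball w hw).2))
      · exact hcont_u.mono (fun w hw => (hsph_ball w hw).1)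
    exact ContinuousOn.congr hrhs hζd
  have hint1 : CircleIntegrable (fun w : ℂ => deriv (zetaA F) w / zetaA F w) 0 r :=
    ContinuousOn.circleIntegrable hr0.le hcont_sphere
  have hint2 : CircleIntegrable (fun w : ℂ => (k:ℂ) * w⁻¹) 0 r := by
    apply ContinuousOn.circleIntegrable hr0.le
    exact continuousOn_const.mul (ContinuousOn.inv₀ continuousOn_id
      (fun w hw => (hsph_ball w hw).2))
  have hgoursat : (∮ w in C(0, r),
      (deriv (zetaA F) w / zetaA F w - (k:ℂ) * w⁻¹)) = 0 := by
    rw [circleIntegral.integral_congr hr0.le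
      (show Set.EqOn (fun w : ℂ => deriv (zetaA F) w / zetaA F w - (k:ℂ) * w⁻¹)
        (fun w : ℂ => deriv u w / u w) (sphere (0:ℂ) r) from fun w hw => by
          simp only
          rw [hζd w hw]; ring)]
    apply Complex.circleIntegral_eq_zero_of_differentiable_on_off_countable hr0.le
      Set.countable_empty
    · apply hcont_u.mono
      intro w hw
      rw [mem_closedBall_zero_iff] at hw
      rw [mem_ball_zero_iff]
      exact lt_of_le_of_lt hw hrρ
    · intro v hv
      have hv1 : v ∈ ball (0:ℂ) r := hv.1
      have hvball : v ∈ ball (0:ℂ) ρ := by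
        rw [mem_ball_zero_iff] at hv1 ⊢
        exact lt_trans hv1 hrρ
      exact DifferentiableAt.div (hderivu v hvball).differentiableAt
        (hAnBall v hvball).differentiableAt ((hρ v hvball).1.2)
  have hI2 : (∮ w in C(0, r), (k:ℂ) * w⁻¹) = (k:ℂ) * (2 * Real.pi * Complex.I) := by
    rw [circleIntegral.integral_const_mul]
    congr 1
    have h1 := circleIntegral.integral_sub_center_inv (0:ℂ) (ne_of_gt hr0)
    simpa using h1
  have hksplit := circleIntegral.integral_sub hint1 hint2
  rw [hgoursat, hI1, hI2] at hksplit
  have hk0 : (k:ℂ) = 0 := by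
    have hzz : (k:ℂ) * (2 * Real.pi * Complex.I) = 0 := by linear_combination hksplit
    rcases mul_eq_zero.mp hzz with h | h
    · exact h
    · exact absurd h Complex.two_pi_I_ne_zero
  have hm1 : m = 1 := by
    have : k = 0 := by exact_mod_cast hk0
    omega
  subst hm1
  -- η vanishes at 0 with nonzero derivative
  have hη0 : η 0 = 0 := by
    have h1 := hu_ev0.self_of_nhds
    simpa using h1
  have hu_ev1 : η =ᶠ[𝓝 (0:ℂ)] fun w => w * u w := by
    filter_upwards [hu_ev0] with w hw
    simpa using hw
  have hderiv_eta : deriv η 0 = u 0 := by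
    rw [Filter.EventuallyEq.deriv_eq hu_ev1]
    have h1 : HasDerivAt (fun w : ℂ => w * u w) (1 * u 0 + 0 * deriv u 0) 0 :=
      (hasDerivAt_id 0).mul hu_an.differentiableAt.hasDerivAt
    rw [h1.deriv]; ring
  have hderiv_ne : deriv η 0 ≠ 0 := by rw [hderiv_eta]; exact hu0
  have hzero_iff : ∀ w ∈ uDisk, (η w = 0 ↔ w = 0) := by
    intro w hw
    constructor
    · intro h0
      by_contra hw0
      have h1 : η w = w * zetaA F w := eta_eq_mul hp ((hmemD w).mp hw) hw0
      rw [h0] at h1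
      exact (mul_ne_zero hw0 (zeta_ne hp ((hmemD w).mp hw) hw0)) h1.symm
    · rintro rfl; exact hη0
  have hmaps : Set.MapsTo η uDisk uDisk := by
    intro w hw
    rcases eq_or_ne w 0 with rfl | hw0
    · rw [hmemD, hη0]; simp
    · rw [hmemD]
      exact eta_abs_lt hm hp ((hmemD w).mp hw) hw0
  have hschwarz : ∀ w ∈ uDisk, ‖η w‖ ≤ ‖w‖ := by
    have hDOn' : DifferentiableOn ℂ η (ball (0:ℂ) 1) := by rw [← huDisk]; exact hDOn
    have hmaps' : Set.MapsTo η (ball (0:ℂ) 1) (ball (0:ℂ) 1) := by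
      rw [← huDisk]; exact hmaps
    intro w hw
    exact Complex.norm_le_norm_of_mapsTo_ball hDOn' (hmaps'.mono_right ball_subset_closedBall) hη0 ((hmemD w).mp hw)
  refine ⟨η, hDOn, hval, hmaps, hschwarz, hderiv_ne, hzero_iff, ?_⟩
  intro η' hη'd hη'val w hw
  rcases eq_or_ne w 0 with rfl | hw0
  · have hc1 : ContinuousAt η' 0 :=
      (hη'd.differentiableAt (hopen.mem_nhds h0mem)).continuousAt
    have hc2 : ContinuousAt η 0 := (hdiff 0 h0mem).continuousAt
    have heq : ∀ᶠ v in 𝓝[≠] (0:ℂ), η' v = η v := by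
      filter_upwards [eventually_mem_nhdsWithin, habs_ev.filter_mono nhdsWithin_le_nhds]
        with v hv0 hv1
      obtain ⟨z, hz, rfl⟩ := exists_z hv1 hv0
      rw [hη'val z hz, hval z hz]
    have ht1 : Filter.Tendsto η' (𝓝[≠] (0:ℂ)) (𝓝 (η' 0)) :=
      hc1.tendsto.mono_left nhdsWithin_le_nhds
    have ht2 : Filter.Tendsto η (𝓝[≠] (0:ℂ)) (𝓝 (η' 0)) := ht1.congr' heq
    have ht3 : Filter.Tendsto η (𝓝[≠] (0:ℂ)) (𝓝 (η 0)) :=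
      hc2.tendsto.mono_left nhdsWithin_le_nhds
    exact tendsto_nhds_unique ht2 ht3
  · obtain ⟨z, hz, rfl⟩ := exists_z ((hmemD _).mp hw) hw0
    rw [hη'val z hz, hval z hz]

end
end

section
/- Let μ be a probability measure on ℝ whose F-transform satisfies F_μ(z + 2π) = F_μ(z) + 2π on ℂ⁺, and let ν = W(μ) be the pushforward of μ under x ↦ exp(−ix). Then: (i) for every x ∈ ℝ with μ({x}) > 0, one has ν({exp(−ix)}) = μ({x}); (ii) conversely, for every ζ on the unit circle with ν({ζ}) > 0, there exists exactly one x ∈ ℝ with exp(−ix) = ζ and μ({x}) > 0, and for this x one has μ({x}) = ν({ζ}). -/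
open Complex MeasureTheory Filter Topology

noncomputable section

/-- The wrapping map: pushforward under x ↦ exp(-ix). -/
def wrap (μ : Measure ℝ) : Measure ℂ :=
  μ.map (fun x : ℝ => Complex.exp (-(x : ℂ) * Complex.I))

/- ### Auxiliary lemmas -/

lemma tendsto_iy_cauchyG (μ : Measure ℝ) [IsProbabilityMeasure μ] (x : ℝ) :
    Tendsto (fun y : ℝ => (Complex.I * y) * cauchyG μ ((x:ℂ) + Complex.I * y))
      (𝓝[>] (0:ℝ)) (𝓝 ((μ {x}).toReal : ℂ)) := by
  have key : ∀ y : ℝ, (Complex.I * y) * cauchyG μ ((x:ℂ) + Complex.I * y)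
      = ∫ t, (Complex.I * y) * (((x:ℂ) + Complex.I * y) - t)⁻¹ ∂μ := fun y =>
    (MeasureTheory.integral_const_mul _ _).symm
  have hint : (∫ t, Set.indicator {x} (fun _ => (1:ℂ)) t ∂μ) = ((μ {x}).toReal : ℂ) := by
    rw [MeasureTheory.integral_indicator_const (1:ℂ) (measurableSet_singleton x)]
    simp [Complex.real_smul, measureReal_def]
  have main : Tendsto (fun y : ℝ => ∫ t, (Complex.I * y) * (((x:ℂ) + Complex.I * y) - t)⁻¹ ∂μ)
      (𝓝[>] (0:ℝ)) (𝓝 (∫ t, Set.indicator {x} (fun _ => (1:ℂ)) t ∂μ)) := by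
    apply MeasureTheory.tendsto_integral_filter_of_dominated_convergence (fun _ => (1:ℝ))
    · filter_upwards with y
      exact (((measurable_const.sub Complex.measurable_ofReal).inv.const_mul _)).aestronglyMeasurable
    · filter_upwards [self_mem_nhdsWithin] with y (hy : 0 < y)
      filter_upwards with t
      rw [norm_mul, norm_inv]
      have h1 : ‖Complex.I * (y:ℂ)‖ = y := by
        simp [abs_of_pos hy]
      have h2 : y ≤ ‖((x:ℂ) + Complex.I * y) - t‖ := by
        have := Complex.abs_im_le_norm (((x:ℂ) + Complex.I * y) - t)
        simp only [Complex.sub_im, Complex.add_im, Complex.ofReal_im, Complex.mul_im,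
          Complex.I_re, Complex.I_im, Complex.ofReal_re] at this
        calc y ≤ |y| := le_abs_self y
        _ ≤ _ := by simpa using this
      rw [h1, ← div_eq_mul_inv, div_le_one (lt_of_lt_of_le hy h2)]
      exact h2
    · exact MeasureTheory.integrable_const 1
    · filter_upwards with t
      by_cases ht : t = x
      · subst ht
        have : ∀ᶠ y : ℝ in 𝓝[>] (0:ℝ),
            (Complex.I * y) * (((t:ℂ) + Complex.I * y) - t)⁻¹ = 1 := by
          filter_upwards [self_mem_nhdsWithin] with y (hy : 0 < y)
          have hne : Complex.I * (y:ℂ) ≠ 0 := by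
            simp [Complex.I_ne_zero, Complex.ofReal_ne_zero, hy.ne']
          rw [add_sub_cancel_left, mul_inv_cancel₀ hne]
        have hi : ({t} : Set ℝ).indicator (fun _ => (1:ℂ)) t = 1 := by simp
        rw [hi]
        exact Tendsto.congr' (this.mono fun y h => h.symm) tendsto_const_nhds
      · have hi : ({x} : Set ℝ).indicator (fun _ => (1:ℂ)) t = 0 := by simp [ht]
        rw [hi]
        have h1 : Tendsto (fun y : ℝ => Complex.I * (y:ℂ)) (𝓝[>] (0:ℝ)) (𝓝 0) := by
          have : Tendsto (fun y : ℝ => Complex.I * (y:ℂ)) (𝓝 (0:ℝ)) (𝓝 (Complex.I * 0)) :=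
            ((continuous_const.mul Complex.continuous_ofReal).tendsto 0)
          simpa using this.mono_left nhdsWithin_le_nhds
        have h2 : Tendsto (fun y : ℝ => (((x:ℂ) + Complex.I * y) - t)⁻¹) (𝓝[>] (0:ℝ))
            (𝓝 (((x:ℂ) - t)⁻¹)) := by
          apply Tendsto.inv₀
          · have : Tendsto (fun y : ℝ => ((x:ℂ) + Complex.I * y) - t) (𝓝 (0:ℝ))
                (𝓝 (((x:ℂ) + Complex.I * 0) - t)) :=
              (((continuous_const.add (continuous_const.mul Complex.continuous_ofReal)).sub
                continuous_const).tendsto 0)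
            simpa using this.mono_left nhdsWithin_le_nhds
          · simp only [sub_ne_zero]
            exact_mod_cast fun h => ht (by exact_mod_cast h.symm)
        simpa using h1.mul h2
  rw [hint] at main
  exact main.congr fun y => (key y).symm

lemma tendsto_Ftrans_atom (μ : Measure ℝ) [IsProbabilityMeasure μ] (x : ℝ)
    (hx : 0 < μ {x}) :
    Tendsto (fun y : ℝ => Ftrans μ ((x:ℂ) + Complex.I * y)) (𝓝[>] (0:ℝ)) (𝓝 0) := by
  have ha : ((μ {x}).toReal : ℂ) ≠ 0 := by
    have : 0 < (μ {x}).toReal := ENNReal.toReal_pos hx.ne' (measure_ne_top μ _)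
    exact_mod_cast this.ne'
  have h1 : Tendsto (fun y : ℝ => Complex.I * (y:ℂ)) (𝓝[>] (0:ℝ)) (𝓝 0) := by
    have : Tendsto (fun y : ℝ => Complex.I * (y:ℂ)) (𝓝 (0:ℝ)) (𝓝 (Complex.I * 0)) :=
      ((continuous_const.mul Complex.continuous_ofReal).tendsto 0)
    simpa using this.mono_left nhdsWithin_le_nhds
  have h2 := (tendsto_iy_cauchyG μ x).inv₀ ha
  have hprod := h1.mul h2
  rw [zero_mul] at hprod
  apply hprod.congr'
  filter_upwards [self_mem_nhdsWithin] with y (hy : 0 < y)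
  have hz : Complex.I * (y:ℂ) ≠ 0 := by
    simp [Complex.I_ne_zero, Complex.ofReal_ne_zero, hy.ne']
  rw [Ftrans, mul_inv, ← mul_assoc, mul_inv_cancel₀ hz, one_mul]

lemma Ftrans_shift_nat (μ : Measure ℝ) (hL : inClassL μ) (n : ℕ) :
    ∀ z ∈ UHP, Ftrans μ (z + 2 * Real.pi * n) = Ftrans μ z + 2 * Real.pi * n := by
  induction n with
  | zero => intro z _; simp
  | succ n ih =>
    intro z hz
    have hz' : z + 2 * Real.pi * n ∈ UHP := by
      simp only [UHP, Set.mem_setOf_eq] at hz ⊢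
      simp [hz]
    have := hL _ hz'
    have heq : z + 2 * (Real.pi:ℂ) * (n+1 : ℕ) = z + 2 * Real.pi * n + 2 * Real.pi := by
      push_cast; ring
    rw [heq, this, ih z hz]
    push_cast; ring

lemma no_atom_shift (μ : Measure ℝ) [IsProbabilityMeasure μ] (hL : inClassL μ)
    (x : ℝ) (hx : 0 < μ {x}) (n : ℕ) (hn : 0 < n) :
    ¬ 0 < μ {x + 2 * Real.pi * n} := by
  intro hx'
  have h1 := tendsto_Ftrans_atom μ x hx
  have h2 := tendsto_Ftrans_atom μ (x + 2 * Real.pi * n) hx'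
  have h3 : Tendsto (fun y : ℝ => Ftrans μ (((x + 2 * Real.pi * n : ℝ):ℂ) + Complex.I * y))
      (𝓝[>] (0:ℝ)) (𝓝 (0 + 2 * Real.pi * n)) := by
    have heq : ∀ y : ℝ, 0 < y →
        Ftrans μ (((x + 2 * Real.pi * n : ℝ):ℂ) + Complex.I * y)
          = Ftrans μ ((x:ℂ) + Complex.I * y) + 2 * Real.pi * n := by
      intro y hy
      have hz : ((x:ℂ) + Complex.I * y) ∈ UHP := by
        simp only [UHP, Set.mem_setOf_eq]
        simp [hy]
      have := Ftrans_shift_nat μ hL n _ hz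
      have harg : ((x + 2 * Real.pi * n : ℝ):ℂ) + Complex.I * y
          = (x:ℂ) + Complex.I * y + 2 * Real.pi * n := by push_cast; ring
      rw [harg, this]
    have := (h1.add (tendsto_const_nhds (x := (2 * Real.pi * n : ℂ))))
    apply this.congr'
    filter_upwards [self_mem_nhdsWithin] with y (hy : 0 < y)
    exact (heq y hy).symm
  have := tendsto_nhds_unique h2 h3
  rw [zero_add] at this
  have hpi : (2 * Real.pi * n : ℂ) ≠ 0 := by
    have : (0:ℝ) < 2 * Real.pi * n := by positivity
    exact_mod_cast this.ne'
  exact hpi this.symm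

lemma atoms_unique_mod (μ : Measure ℝ) [IsProbabilityMeasure μ] (hL : inClassL μ)
    {x x' : ℝ} (hx : 0 < μ {x}) (hx' : 0 < μ {x'}) {k : ℤ}
    (hk : x' = x + 2 * Real.pi * k) : x' = x := by
  rcases lt_trichotomy k 0 with h | h | h
  · exfalso
    obtain ⟨n, hn⟩ : ∃ n : ℕ, (-k : ℤ) = n := ⟨(-k).toNat, (Int.toNat_of_nonneg (by omega)).symm⟩
    apply no_atom_shift μ hL x' hx' n (by omega)
    have : x = x' + 2 * Real.pi * n := by
      have : (n : ℝ) = -(k:ℝ) := by exact_mod_cast congrArg (Int.cast : ℤ → ℝ) hn.symm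
      rw [this, hk]; ring
    rwa [← this]
  · subst h; simpa using hk
  · exfalso
    obtain ⟨n, hn⟩ : ∃ n : ℕ, k = n := ⟨k.toNat, (Int.toNat_of_nonneg (by omega)).symm⟩
    apply no_atom_shift μ hL x hx n (by omega)
    have hnr : (k:ℝ) = n := by exact_mod_cast congrArg (Int.cast : ℤ → ℝ) hn
    have : x' = x + 2 * Real.pi * n := by rw [hk, hnr]
    rwa [← this]

lemma exp_preimage (x₀ : ℝ) :
    (fun x : ℝ => Complex.exp (-(x : ℂ) * Complex.I)) ⁻¹'
      {Complex.exp (-(x₀ : ℂ) * Complex.I)}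
      = ⋃ n : ℤ, {x₀ + 2 * Real.pi * n} := by
  ext x
  simp only [Set.mem_preimage, Set.mem_singleton_iff, Set.mem_iUnion]
  rw [Complex.exp_eq_exp_iff_exists_int]
  constructor
  · rintro ⟨n, hn⟩
    refine ⟨-n, ?_⟩
    have h1 : (-(x:ℂ)) * Complex.I = (-(x₀:ℂ) + n * (2 * Real.pi)) * Complex.I := by
      rw [hn]; ring
    have h2 : (-(x:ℂ)) = -(x₀:ℂ) + n * (2 * Real.pi) :=
      mul_right_cancel₀ Complex.I_ne_zero h1
    have h3 : ((x:ℝ):ℂ) = ((x₀ + 2 * Real.pi * (-n : ℤ) : ℝ):ℂ) := by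
      push_cast
      linear_combination -h2
    exact_mod_cast h3
  · rintro ⟨n, hn⟩
    refine ⟨-n, ?_⟩
    rw [hn]
    push_cast
    ring

lemma coset_measure (μ : Measure ℝ) (x₀ : ℝ) :
    μ (⋃ n : ℤ, {x₀ + 2 * Real.pi * n}) = ∑' n : ℤ, μ {x₀ + 2 * Real.pi * n} := by
  apply measure_iUnion
  · intro m n hmn
    simp only [Set.disjoint_singleton]
    intro h
    apply hmn
    have : (m : ℝ) = n := by
      have h2 : 2 * Real.pi * m = 2 * Real.pi * n := by linarith
      have hpi : (2 * Real.pi : ℝ) ≠ 0 := by positivity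
      exact mul_left_cancel₀ hpi h2
    exact_mod_cast this
  · exact fun n => measurableSet_singleton _

lemma exp_measurable : Measurable (fun x : ℝ => Complex.exp (-(x : ℂ) * Complex.I)) :=
  (Complex.continuous_exp.comp
    ((Complex.continuous_ofReal.neg).mul continuous_const)).measurable

lemma wrap_atom (μ : Measure ℝ) [IsProbabilityMeasure μ] (hL : inClassL μ)
    (x : ℝ) (hx : 0 < μ {x}) :
    wrap μ {Complex.exp (-(x : ℂ) * Complex.I)} = μ {x} := by
  rw [wrap, Measure.map_apply exp_measurable (measurableSet_singleton _),
    exp_preimage x, coset_measure μ x]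
  rw [tsum_eq_single 0 ?_]
  · norm_num
  · intro n hn
    by_contra h
    have hpos : 0 < μ {x + 2 * Real.pi * n} := pos_iff_ne_zero.mpr h
    have := atoms_unique_mod μ hL hx hpos rfl
    apply hn
    have h2 : 2 * Real.pi * n = 0 := by linarith [congrArg id this]
    have hpi : (2 * Real.pi : ℝ) ≠ 0 := by positivity
    have : (n:ℝ) = 0 := by
      rcases mul_eq_zero.mp h2 with h | h
      · exact absurd h hpi
      · exact h
    exact_mod_cast this

/-- For `μ ∈ L`, wrapping preserves atoms and their weights: atoms of `μ` map to atoms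
of `W(μ)` of the same weight, and every atom of `W(μ)` comes from exactly one atom of
`μ`, of the same weight. -/
theorem wrap_preserves_atoms
    (μ : Measure ℝ) [IsProbabilityMeasure μ] (hL : inClassL μ) :
    (∀ x : ℝ, 0 < μ {x} →
      wrap μ {Complex.exp (-(x : ℂ) * Complex.I)} = μ {x}) ∧
    (∀ ζ : ℂ, 0 < wrap μ {ζ} →
      (∃! x : ℝ, Complex.exp (-(x : ℂ) * Complex.I) = ζ ∧ 0 < μ {x}) ∧
      (∀ x : ℝ, Complex.exp (-(x : ℂ) * Complex.I) = ζ → 0 < μ {x} →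
        μ {x} = wrap μ {ζ})) := by
  constructor
  · exact fun x hx => wrap_atom μ hL x hx
  · intro ζ hζ
    have hmap : wrap μ {ζ}
        = μ ((fun x : ℝ => Complex.exp (-(x : ℂ) * Complex.I)) ⁻¹' {ζ}) :=
      Measure.map_apply exp_measurable (measurableSet_singleton _)
    -- the fiber is nonempty
    obtain ⟨x₀, hx₀⟩ : ∃ x₀ : ℝ, Complex.exp (-(x₀ : ℂ) * Complex.I) = ζ := by
      by_contra h
      push_neg at h
      have : ((fun x : ℝ => Complex.exp (-(x : ℂ) * Complex.I)) ⁻¹' {ζ}) = ∅ := by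
        ext x
        simp only [Set.mem_preimage, Set.mem_singleton_iff, Set.mem_empty_iff_false, iff_false]
        exact h x
      rw [hmap, this] at hζ
      simp at hζ
    rw [← hx₀] at hmap hζ
    rw [hmap, exp_preimage x₀, coset_measure μ x₀] at hζ
    -- some translate is an atom
    obtain ⟨n, hn⟩ : ∃ n : ℤ, 0 < μ {x₀ + 2 * Real.pi * n} := by
      by_contra h
      push_neg at h
      have : ∀ n : ℤ, μ {x₀ + 2 * Real.pi * n} = 0 := fun n => le_antisymm (h n) (zero_le)
      rw [tsum_congr this] at hζ
      simp at hζ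
    set x := x₀ + 2 * Real.pi * n with hxdef
    have hfx : Complex.exp (-(x : ℂ) * Complex.I) = ζ := by
      rw [← hx₀, hxdef]
      push_cast
      rw [show -((x₀:ℂ) + 2 * Real.pi * n) * Complex.I
        = -(x₀:ℂ) * Complex.I + (-n : ℤ) * (2 * Real.pi * Complex.I) by push_cast; ring]
      rw [Complex.exp_add, Complex.exp_int_mul_two_pi_mul_I, mul_one]
    constructor
    · refine ⟨x, ⟨hfx, hn⟩, ?_⟩
      rintro x' ⟨hfx', hx'⟩
      have : Complex.exp (-(x' : ℂ) * Complex.I) = Complex.exp (-(x : ℂ) * Complex.I) := by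
        rw [hfx', hfx]
      have hmem : x' ∈ (fun t : ℝ => Complex.exp (-(t : ℂ) * Complex.I)) ⁻¹'
          {Complex.exp (-(x : ℂ) * Complex.I)} := this
      rw [exp_preimage x] at hmem
      simp only [Set.mem_iUnion, Set.mem_singleton_iff] at hmem
      obtain ⟨k, hk⟩ := hmem
      exact atoms_unique_mod μ hL hn hx' hk
    · intro x' hfx' hx'
      rw [← hfx']
      exact (wrap_atom μ hL x' hx').symm

end
end

section
/- Let {ν_{n,k} : n ∈ ℕ, 1 ≤ k ≤ k_n} be a triangular array of probability measures on the unit circle 𝕋, each of which is the wrapping of some measure in the class L (i.e., for each n, k there exists a probability measure on ℝ whose F-transform is 2π-periodic in the sense F(z + 2π) = F(z) + 2π whose pushforward under x ↦ exp(−ix) equals ν_{n,k}). Suppose the array is infinitesimal: for every ε > 0, lim_{n→∞} max_{1 ≤ k ≤ k_n} ν_{n,k}({ζ ∈ 𝕋 : |ζ − 1| ≥ ε}) = 0. Then there exists a triangular array {μ_{n,k} : n ∈ ℕ, 1 ≤ k ≤ k_n} of probability measures on ℝ, each in L, such that W(μ_{n,k}) = ν_{n,k} for all n, k and the array {μ_{n,k}}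 is infinitesimal: for every ε > 0, lim_{n→∞} max_{1 ≤ k ≤ k_n} μ_{n,k}({x ∈ ℝ : |x| ≥ ε}) = 0. -/
open Complex MeasureTheory Filter Topology

noncomputable section

open scoped ENNReal

namespace LiftAux

variable {μ : Measure ℝ} {z : ℂ}

lemma normSq_sub_pos (hz : 0 < z.im) (x : ℝ) : 0 < Complex.normSq (z - x) := by
  apply Complex.normSq_pos.2
  intro h
  have : (z - x).im = 0 := by rw [h]; simp
  simp [Complex.sub_im] at this
  linarith

lemma integrable_inv [IsFiniteMeasure μ] (hz : 0 < z.im) :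
    Integrable (fun x : ℝ => (z - (x : ℂ))⁻¹) μ := by
  have hc : Continuous (fun x : ℝ => (z - (x : ℂ))⁻¹) := by
    apply Continuous.inv₀ (by continuity)
    intro x h
    have : (z - x).im = 0 := by rw [h]; simp
    simp [Complex.sub_im] at this
    linarith
  refine (integrable_const ((z.im)⁻¹ : ℝ)).mono' hc.aestronglyMeasurable ?_
  filter_upwards with x
  rw [norm_inv]
  apply inv_anti₀ hz
  calc z.im = (z - x).im := by simp
    _ ≤ |(z - x).im| := le_abs_self _
    _ ≤ ‖z - (x:ℂ)‖ := Complex.abs_im_le_norm _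

lemma im_inv_eq (hz : 0 < z.im) (x : ℝ) :
    ((z - (x : ℂ))⁻¹).im = -z.im / Complex.normSq (z - x) := by
  rw [Complex.inv_im]; simp

lemma im_cauchyG [IsFiniteMeasure μ] (hz : 0 < z.im) :
    (cauchyG μ z).im = ∫ x, -z.im / Complex.normSq (z - x) ∂μ := by
  have := integral_im (𝕜 := ℂ) (μ := μ) (f := fun x : ℝ => (z - (x:ℂ))⁻¹) (integrable_inv hz)
  rw [RCLike.im_eq_complex_im] at this
  rw [cauchyG, ← this]
  congr 1; ext x; exact im_inv_eq hz x

end LiftAux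

namespace LA2
open LiftAux
variable {μ : Measure ℝ} {z : ℂ}

lemma integrable_den [IsFiniteMeasure μ] (hz : 0 < z.im) :
    Integrable (fun x : ℝ => z.im / Complex.normSq (z - x)) μ := by
  have := (integrable_inv (μ := μ) hz).im
  have heq : (fun x : ℝ => z.im / Complex.normSq (z - x))
      = fun x : ℝ => -(((z - (x:ℂ))⁻¹).im) := by
    ext x; rw [im_inv_eq hz x]; ring
  rw [heq]
  exact this.neg

lemma im_cauchyG_neg [IsProbabilityMeasure μ] (hz : 0 < z.im) : (cauchyG μ z).im < 0 := by
  rw [im_cauchyG hz]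
  have h1 : ∫ x, -z.im / Complex.normSq (z - x) ∂μ
      = -∫ x, z.im / Complex.normSq (z - x) ∂μ := by
    rw [← integral_neg]; congr 1; ext x; ring
  have hpos : 0 < ∫ x, z.im / Complex.normSq (z - x) ∂μ := by
    rw [integral_pos_iff_support_of_nonneg]
    · have : Function.support (fun x : ℝ => z.im / Complex.normSq (z - x)) = Set.univ := by
        ext x; simp only [Function.mem_support, Set.mem_univ, iff_true]
        have := normSq_sub_pos hz x
        positivity
      rw [this]; simp
    · intro x
      have := normSq_sub_pos hz x
      positivity
    · exact integrable_den hz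
  rw [h1]; linarith

lemma cauchyG_ne_zero [IsProbabilityMeasure μ] (hz : 0 < z.im) : cauchyG μ z ≠ 0 := by
  intro h
  have := im_cauchyG_neg (μ := μ) hz
  rw [h] at this; simp at this

lemma cauchyG_eq_inv_Ftrans [IsProbabilityMeasure μ] (hz : 0 < z.im) :
    cauchyG μ z = (Ftrans μ z)⁻¹ := by
  rw [Ftrans, inv_inv]

lemma im_Ftrans_pos [IsProbabilityMeasure μ] (hz : 0 < z.im) : 0 < (Ftrans μ z).im := by
  rw [Ftrans, Complex.inv_im]
  have h1 := im_cauchyG_neg (μ := μ) hz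
  have h2 : 0 < Complex.normSq (cauchyG μ z) := Complex.normSq_pos.2 (cauchyG_ne_zero hz)
  apply div_pos (by linarith) h2

/-- window lower bound on -Im G -/
lemma window_le [IsProbabilityMeasure μ] (hz : 0 < z.im) {δ : ℝ} (hδ : 0 < δ) :
    (μ (Set.Icc (z.re - δ) (z.re + δ))).toReal * (z.im / (z.im ^ 2 + δ ^ 2))
      ≤ -(cauchyG μ z).im := by
  rw [im_cauchyG hz]
  have h1 : -∫ x, -z.im / Complex.normSq (z - x) ∂μ
      = ∫ x, z.im / Complex.normSq (z - x) ∂μ := by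
    rw [← integral_neg]; congr 1; ext x; ring
  rw [h1]
  have hint : Integrable (fun x : ℝ => z.im / Complex.normSq (z - x)) μ := integrable_den hz
  calc (μ (Set.Icc (z.re - δ) (z.re + δ))).toReal * (z.im / (z.im ^ 2 + δ ^ 2))
      = (z.im / (z.im ^ 2 + δ ^ 2)) * (μ (Set.Icc (z.re - δ) (z.re + δ))).toReal := by ring
    _ ≤ ∫ x in Set.Icc (z.re - δ) (z.re + δ), z.im / Complex.normSq (z - x) ∂μ := by
        apply setIntegral_ge_of_const_le_real measurableSet_Icc (measure_ne_top μ _)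
        · intro x hx
          apply div_le_div_of_nonneg_left (le_of_lt hz) (normSq_sub_pos hz x)
          · rw [Complex.normSq_apply]
            simp only [Complex.sub_re, Complex.sub_im, Complex.ofReal_re, Complex.ofReal_im]
            obtain ⟨hx1, hx2⟩ := hx
            nlinarith [sq_nonneg (z.re - x)]
        · exact hint.integrableOn
    _ ≤ ∫ x, z.im / Complex.normSq (z - x) ∂μ := by
        apply setIntegral_le_integral hint
        filter_upwards with x
        have := normSq_sub_pos hz x
        positivity

lemma classL_iterate {μ : Measure ℝ} (hL : inClassL μ) (k : ℤ) :
    ∀ z : ℂ, 0 < z.im → Ftrans μ (z + 2 * Real.pi * k) = Ftrans μ z + 2 * Real.pi * k := by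
  induction k using Int.induction_on with
  | zero => intro z hz; simp
  | succ n ih =>
    intro z hz
    have h1 : (z + 2 * Real.pi * n) ∈ UHP := by
      simp only [UHP, Set.mem_setOf_eq, Complex.add_im, Complex.mul_im]
      simp [hz]
    have h2 := hL _ h1
    have e1 : z + 2 * Real.pi * ((n : ℤ) + 1 : ℤ) = (z + 2 * Real.pi * n) + 2 * Real.pi := by
      push_cast; ring
    rw [e1, h2]
    have ihz := ih z hz
    push_cast at ihz ⊢
    rw [ihz]; ring
  | pred n ih =>
    intro z hz
    have h1 : (z + 2 * Real.pi * (-(n : ℤ) - 1 : ℤ)) ∈ UHP := by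
      simp only [UHP, Set.mem_setOf_eq, Complex.add_im, Complex.mul_im]
      simp [hz]
    have h2 := hL _ h1
    have e1 : z + 2 * Real.pi * (-(n:ℤ)-1:ℤ) + 2 * Real.pi = z + 2 * Real.pi * (-(n:ℤ) : ℤ) := by
      push_cast; ring
    rw [e1] at h2
    have ihz := ih z hz
    rw [h2] at ihz
    push_cast at ihz ⊢
    linear_combination ihz

lemma arctan_sub_ge {a b : ℝ} (ha : 0 ≤ a) (hab : a ≤ b) :
    (b - a) / (1 + b ^ 2) ≤ Real.arctan b - Real.arctan a := by
  have hd : ∀ x : ℝ, HasDerivAt (fun t : ℝ => Real.arctan t - t / (1 + b ^ 2))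
      (1 / (1 + x ^ 2) - 1 / (1 + b ^ 2)) x := fun x =>
    (Real.hasDerivAt_arctan x).sub ((hasDerivAt_id x).div_const _)
  have hmono : MonotoneOn (fun t : ℝ => Real.arctan t - t / (1 + b ^ 2)) (Set.Icc a b) := by
    apply monotoneOn_of_deriv_nonneg (convex_Icc a b)
    · apply Continuous.continuousOn; continuity
    · intro x _
      exact (hd x).differentiableAt.differentiableWithinAt
    · intro x hx
      rw [(hd x).deriv]
      rw [interior_Icc, Set.mem_Ioo] at hx
      have hb2 : 0 < 1 + b ^ 2 := by positivity
      have hx2 : 0 < 1 + x ^ 2 := by positivity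
      have : x ^ 2 ≤ b ^ 2 := by nlinarith [hx.1, hx.2]
      have h1 : 1 / (1 + b ^ 2) ≤ 1 / (1 + x ^ 2) := by
        apply one_div_le_one_div_of_le hx2; linarith
      linarith
  have := hmono (Set.left_mem_Icc.2 hab) (Set.right_mem_Icc.2 hab) hab
  simp only at this
  have hb2 : 0 < 1 + b ^ 2 := by positivity
  rw [sub_div]
  linarith [this]

lemma sum_tail_bound {v : ℝ} (hv : 0 < v) :
    ∀ n : ℕ, ∑ j ∈ Finset.range n, v / (Real.pi ^ 2 * (j + 1 : ℝ) ^ 2 + v ^ 2) ≤ 1 / 2 := by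
  intro n
  have hstep : ∀ j : ℕ, v / (Real.pi ^ 2 * (j + 1 : ℝ) ^ 2 + v ^ 2)
      ≤ (1 / Real.pi) * (Real.arctan (Real.pi * (j + 1) / v) - Real.arctan (Real.pi * j / v)) := by
    intro j
    have ha : 0 ≤ Real.pi * j / v := by positivity
    have hab : Real.pi * j / v ≤ Real.pi * (j + 1) / v := by
      gcongr
      linarith
    have key := arctan_sub_ge ha hab
    have e1 : Real.pi * (j+1) / v - Real.pi * j / v = Real.pi / v := by ring
    have e2 : 1 + (Real.pi * (j+1) / v) ^ 2 = (Real.pi ^ 2 * ((j:ℝ)+1)^2 + v^2) / v ^ 2 := by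
      field_simp; ring
    rw [e1, e2] at key
    have hden : 0 < Real.pi ^ 2 * ((j:ℝ) + 1) ^ 2 + v ^ 2 := by positivity
    have e3 : Real.pi / v / ((Real.pi ^ 2 * ((j:ℝ)+1)^2 + v^2) / v ^ 2)
        = Real.pi * v / (Real.pi ^ 2 * ((j:ℝ)+1)^2 + v^2) := by
      field_simp
    rw [e3] at key
    have := Real.pi_pos
    calc v / (Real.pi ^ 2 * (j + 1 : ℝ) ^ 2 + v ^ 2)
        = (1 / Real.pi) * (Real.pi * v / (Real.pi ^ 2 * ((j:ℝ)+1)^2 + v^2)) := by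
          field_simp
      _ ≤ (1 / Real.pi) * (Real.arctan (Real.pi * (j + 1) / v) - Real.arctan (Real.pi * j / v)) := by
          apply mul_le_mul_of_nonneg_left key (by positivity)
  calc ∑ j ∈ Finset.range n, v / (Real.pi ^ 2 * (j + 1 : ℝ) ^ 2 + v ^ 2)
      ≤ ∑ j ∈ Finset.range n, (1 / Real.pi) * (Real.arctan (Real.pi * (j + 1) / v) - Real.arctan (Real.pi * j / v)) :=
        Finset.sum_le_sum fun j _ => hstep j
    _ = (1 / Real.pi) * ∑ j ∈ Finset.range n, (Real.arctan (Real.pi * (j + 1) / v) - Real.arctan (Real.pi * j / v)) := by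
        rw [Finset.mul_sum]
    _ = (1 / Real.pi) * (Real.arctan (Real.pi * n / v) - Real.arctan (Real.pi * 0 / v)) := by
        congr 1
        have := Finset.sum_range_sub (f := fun j : ℕ => Real.arctan (Real.pi * j / v)) n
        push_cast at this ⊢
        convert this using 2
    _ ≤ (1 / Real.pi) * (Real.pi / 2) := by
        apply mul_le_mul_of_nonneg_left ?_ (by positivity)
        simp only [Nat.cast_zero, mul_zero, zero_div, Real.arctan_zero, sub_zero]
        exact le_of_lt (Real.arctan_lt_pi_div_two _)
    _ = 1 / 2 := by
        field_simp

lemma window_bound {μ : Measure ℝ} [IsProbabilityMeasure μ] (hL : inClassL μ)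
    {δ : ℝ} (hδ : 0 < δ) (k : ℤ) :
    μ (Set.Icc (2 * Real.pi * k - δ) (2 * Real.pi * k + δ))
      ≤ ENNReal.ofReal (2 * δ * (Ftrans μ (δ * Complex.I)).im
          / Complex.normSq (Ftrans μ (δ * Complex.I) + 2 * Real.pi * k)) := by
  set w := Ftrans μ ((δ:ℂ) * Complex.I) with hw
  have him : 0 < ((δ:ℂ) * Complex.I).im := by simp [hδ]
  have hwim : 0 < w.im := im_Ftrans_pos him
  set zk : ℂ := (δ:ℂ) * Complex.I + 2 * Real.pi * k with hzk
  have hzkim : 0 < zk.im := by simp [hzk, hδ]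
  have hzkre : zk.re = 2 * Real.pi * k := by simp [hzk]
  have hF : Ftrans μ zk = w + 2 * Real.pi * k := classL_iterate hL k _ him
  have hG : cauchyG μ zk = (w + 2 * Real.pi * k)⁻¹ := by
    rw [cauchyG_eq_inv_Ftrans hzkim, hF]
  have hns : 0 < Complex.normSq (w + 2 * Real.pi * k) := by
    apply Complex.normSq_pos.2
    intro h
    have : (w + 2 * (Real.pi:ℂ) * k).im = 0 := by rw [h]; simp
    simp only [Complex.add_im, Complex.mul_im, Complex.mul_re] at this
    simp only [Complex.ofReal_im, Complex.ofReal_re, Complex.intCast_im, Complex.intCast_re] at this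
    norm_num at this
    linarith
  have himG : -(cauchyG μ zk).im = w.im / Complex.normSq (w + 2 * Real.pi * k) := by
    rw [hG, Complex.inv_im]
    have : (w + 2 * (Real.pi:ℂ) * k).im = w.im := by
      simp [Complex.add_im, Complex.mul_im]
    rw [this]
    ring
  have key := window_le (μ := μ) hzkim hδ
  rw [himG, hzkre] at key
  have hto : (μ (Set.Icc (2 * Real.pi * k - δ) (2 * Real.pi * k + δ))).toReal
      ≤ 2 * δ * w.im / Complex.normSq (w + 2 * Real.pi * k) := by
    have hzim : zk.im = δ := by simp [hzk]
    rw [hzim] at key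
    have h2 : δ / (δ ^ 2 + δ ^ 2) = 1 / (2 * δ) := by
      field_simp; ring
    rw [h2] at key
    -- key : toReal * (1/(2δ)) ≤ w.im / normSq
    have := mul_le_mul_of_nonneg_left key (le_of_lt (by positivity : (0:ℝ) < 2 * δ))
    calc (μ (Set.Icc (2 * Real.pi * k - δ) (2 * Real.pi * k + δ))).toReal
        = 2 * δ * ((μ (Set.Icc (2 * Real.pi * k - δ) (2 * Real.pi * k + δ))).toReal * (1 / (2*δ))) := by
          field_simp
      _ ≤ 2 * δ * (w.im / Complex.normSq (w + 2 * Real.pi * k)) := this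
      _ = 2 * δ * w.im / Complex.normSq (w + 2 * Real.pi * k) := by ring
  calc μ (Set.Icc (2 * Real.pi * k - δ) (2 * Real.pi * k + δ))
      = ENNReal.ofReal ((μ (Set.Icc (2 * Real.pi * k - δ) (2 * Real.pi * k + δ))).toReal) :=
        (ENNReal.ofReal_toReal (measure_ne_top μ _)).symm
    _ ≤ _ := ENNReal.ofReal_le_ofReal hto

def dd0 (μ : Measure ℝ) (δ : ℝ) : ℤ :=
  round (-(Ftrans μ ((δ:ℂ) * Complex.I)).re / (2 * Real.pi))

lemma re_center (μ : Measure ℝ) (δ : ℝ) :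
    |(Ftrans μ ((δ:ℂ) * Complex.I)).re + 2 * Real.pi * (dd0 μ δ)| ≤ Real.pi := by
  set u := (Ftrans μ ((δ:ℂ) * Complex.I)).re
  set t := -u / (2 * Real.pi) with ht
  have hpi := Real.pi_pos
  have h1 : |t - round t| ≤ 1 / 2 := abs_sub_round t
  have h2 : u + 2 * Real.pi * (dd0 μ δ) = -(2 * Real.pi) * (t - round t) := by
    have hd : (dd0 μ δ : ℤ) = round t := rfl
    have ht2 : 2 * Real.pi * t = -u := by rw [ht]; field_simp
    rw [hd]; linear_combination ht2
  rw [h2, abs_mul, abs_neg, abs_of_pos (by positivity : (0:ℝ) < 2 * Real.pi)]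
  nlinarith [h1]

lemma normSq_far (μ : Measure ℝ) (δ : ℝ) {j : ℤ} (hj : j ≠ 0) :
    Real.pi ^ 2 * (j:ℝ) ^ 2 + (Ftrans μ ((δ:ℂ) * Complex.I)).im ^ 2
      ≤ Complex.normSq (Ftrans μ ((δ:ℂ) * Complex.I) + 2 * Real.pi * ((dd0 μ δ + j : ℤ))) := by
  set w := Ftrans μ ((δ:ℂ) * Complex.I)
  have hre : (w + 2 * (Real.pi:ℂ) * ((dd0 μ δ + j : ℤ))).re
      = (w.re + 2 * Real.pi * (dd0 μ δ)) + 2 * Real.pi * j := by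
    simp [Complex.add_re, Complex.mul_re]
    push_cast
    ring
  have him : (w + 2 * (Real.pi:ℂ) * ((dd0 μ δ + j : ℤ))).im = w.im := by
    simp [Complex.add_im, Complex.mul_im]
  rw [Complex.normSq_apply, hre, him]
  have hc := re_center μ δ
  have hpi := Real.pi_pos
  have hj1 : (1:ℝ) ≤ |(j:ℝ)| := by
    rw [← Int.cast_abs]
    have : (1:ℤ) ≤ |j| := Int.one_le_abs hj
    exact_mod_cast this

  have habs : Real.pi * |(j:ℝ)| ≤ |(w.re + 2 * Real.pi * (dd0 μ δ)) + 2 * Real.pi * j| := by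
    have h2 : 2 * Real.pi * |(j:ℝ)| = |2 * Real.pi * j| := by
      rw [abs_mul]
      rw [abs_of_pos (by positivity : (0:ℝ) < 2 * Real.pi)]
    have := abs_add_le (w.re + 2 * Real.pi * (dd0 μ δ)) (2 * Real.pi * j)
    have h3 : |2 * Real.pi * (j:ℝ)| - |w.re + 2 * Real.pi * (dd0 μ δ)|
        ≤ |(w.re + 2 * Real.pi * (dd0 μ δ)) + 2 * Real.pi * j| := by
      have := abs_sub_abs_le_abs_sub (2 * Real.pi * (j:ℝ)) (-(w.re + 2 * Real.pi * (dd0 μ δ)))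
      simp only [abs_neg, sub_neg_eq_add] at this
      calc |2 * Real.pi * (j:ℝ)| - |w.re + 2 * Real.pi * ↑(dd0 μ δ)|
          ≤ |2 * Real.pi * (j:ℝ) + (w.re + 2 * Real.pi * ↑(dd0 μ δ))| := this
        _ = |(w.re + 2 * Real.pi * (dd0 μ δ)) + 2 * Real.pi * j| := by rw [add_comm]
    nlinarith [h3, hc, hj1]
  have h4 : (Real.pi * |(j:ℝ)|) ^ 2 ≤ ((w.re + 2 * Real.pi * (dd0 μ δ)) + 2 * Real.pi * j) ^ 2 := by
    have h5 : 0 ≤ Real.pi * |(j:ℝ)| := by positivity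
    nlinarith [habs, abs_nonneg ((w.re + 2 * Real.pi * (dd0 μ δ)) + 2 * Real.pi * j), _root_.sq_abs ((w.re + 2 * Real.pi * (dd0 μ δ)) + 2 * Real.pi * j)]
  have h6 : (Real.pi * |(j:ℝ)|)^2 = Real.pi ^2 * (j:ℝ)^2 := by
    rw [mul_pow, _root_.sq_abs]
  nlinarith [h4]

/-- The union of all far windows has small measure. -/
lemma far_union_bound {μ : Measure ℝ} [IsProbabilityMeasure μ] (hL : inClassL μ)
    {δ : ℝ} (hδ : 0 < δ) :
    μ (⋃ j : ℤ, if j = 0 then (∅ : Set ℝ) else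
        Set.Icc (2 * Real.pi * ((dd0 μ δ + j : ℤ)) - δ) (2 * Real.pi * ((dd0 μ δ + j : ℤ)) + δ))
      ≤ ENNReal.ofReal (2 * δ) := by
  set w := Ftrans μ ((δ:ℂ) * Complex.I) with hw
  have hwim : 0 < w.im := im_Ftrans_pos (by simp [hδ])
  set v := w.im
  set S : ℤ → Set ℝ := fun j => if j = 0 then (∅ : Set ℝ) else
        Set.Icc (2 * Real.pi * ((dd0 μ δ + j : ℤ)) - δ) (2 * Real.pi * ((dd0 μ δ + j : ℤ)) + δ)
    with hS
  -- each far window bounded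
  have hwin : ∀ j : ℤ, j ≠ 0 → μ (S j) ≤
      ENNReal.ofReal (2 * δ * v / (Real.pi ^ 2 * (j:ℝ) ^ 2 + v ^ 2)) := by
    intro j hj
    rw [hS]
    simp only [if_neg hj]
    refine le_trans (window_bound hL hδ (dd0 μ δ + j)) (ENNReal.ofReal_le_ofReal ?_)
    have h1 := normSq_far μ δ hj
    have h2 : 0 < Real.pi ^ 2 * (j:ℝ) ^ 2 + v ^ 2 := by positivity
    apply div_le_div_of_nonneg_left (by positivity) h2
    push_cast at h1 ⊢
    convert h1 using 2
  -- cover by ℕ-indexed union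
  have hcover : (⋃ j : ℤ, S j) ⊆ ⋃ n : ℕ, (S (n+1) ∪ S (-(n:ℤ)-1)) := by
    intro x hx
    rw [Set.mem_iUnion] at hx
    obtain ⟨j, hxj⟩ := hx
    rw [Set.mem_iUnion]
    rcases lt_trichotomy j 0 with h | h | h
    · refine ⟨(-j-1).toNat, Or.inr ?_⟩
      have : -((-j-1).toNat : ℤ) - 1 = j := by omega
      rwa [this]
    · subst h; simp [hS] at hxj
    · refine ⟨(j-1).toNat, Or.inl ?_⟩
      have : ((j-1).toNat : ℤ) + 1 = j := by omega
      rwa [this]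
  have hsummand : ∀ n : ℕ, μ (S (n+1) ∪ S (-(n:ℤ)-1))
      ≤ ENNReal.ofReal (4 * δ * (v / (Real.pi ^ 2 * ((n:ℝ)+1) ^ 2 + v ^ 2))) := by
    intro n
    have e1 : ((((n:ℤ)+1) : ℤ) : ℝ) ^ 2 = ((n:ℝ)+1)^2 := by push_cast; ring
    have e2 : (((-(n:ℤ)-1) : ℤ) : ℝ) ^ 2 = ((n:ℝ)+1)^2 := by push_cast; ring
    have b1 := hwin ((n:ℤ)+1) (by omega)
    have b2 := hwin (-(n:ℤ)-1) (by omega)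
    rw [e1] at b1
    rw [e2] at b2
    calc μ (S (n+1) ∪ S (-(n:ℤ)-1)) ≤ μ (S (n+1)) + μ (S (-(n:ℤ)-1)) := measure_union_le _ _
      _ ≤ ENNReal.ofReal (2 * δ * v / (Real.pi ^ 2 * ((n:ℝ)+1) ^ 2 + v ^ 2))
          + ENNReal.ofReal (2 * δ * v / (Real.pi ^ 2 * ((n:ℝ)+1) ^ 2 + v ^ 2)) := by
          exact add_le_add b1 b2
      _ = ENNReal.ofReal (4 * δ * (v / (Real.pi ^ 2 * ((n:ℝ)+1) ^ 2 + v ^ 2))) := by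
          rw [← ENNReal.ofReal_add (by positivity) (by positivity)]
          congr 1
          ring
  have hsum : Summable (fun n : ℕ => 4 * δ * (v / (Real.pi ^ 2 * ((n:ℝ)+1) ^ 2 + v ^ 2))) := by
    apply Summable.mul_left
    have hcomp : Summable (fun n : ℕ => v / Real.pi ^ 2 * (1 / ((n:ℝ)+1) ^ 2)) := by
      apply Summable.mul_left
      have := Real.summable_one_div_nat_pow.2 (le_refl 2)
      exact_mod_cast (summable_nat_add_iff 1).2 this
    apply Summable.of_nonneg_of_le (fun n => by positivity) ?_ hcomp
    intro n
    have hA : (0:ℝ) < Real.pi ^ 2 * ((n:ℝ)+1) ^ 2 := by positivity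
    calc v / (Real.pi ^ 2 * ((n:ℝ)+1) ^ 2 + v ^ 2)
        ≤ v / (Real.pi ^ 2 * ((n:ℝ)+1) ^ 2) :=
          div_le_div_of_nonneg_left (le_of_lt hwim) hA (by nlinarith [sq_nonneg v])
      _ = v / Real.pi ^ 2 * (1 / ((n:ℝ)+1) ^ 2) := by
          field_simp
  have htsum : (∑' n : ℕ, 4 * δ * (v / (Real.pi ^ 2 * ((n:ℝ)+1) ^ 2 + v ^ 2))) ≤ 2 * δ := by
    apply Real.tsum_le_of_sum_range_le (fun n => by positivity)
    intro n
    have := sum_tail_bound hwim n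
    calc ∑ j ∈ Finset.range n, 4 * δ * (v / (Real.pi ^ 2 * ((j:ℝ)+1) ^ 2 + v ^ 2))
        = 4 * δ * ∑ j ∈ Finset.range n, v / (Real.pi ^ 2 * ((j:ℝ)+1) ^ 2 + v ^ 2) := by
          rw [Finset.mul_sum]
      _ ≤ 4 * δ * (1/2) := by
          apply mul_le_mul_of_nonneg_left ?_ (by positivity)
          convert this using 2 with j
      _ = 2 * δ := by ring
  calc μ (⋃ j : ℤ, S j) ≤ μ (⋃ n : ℕ, (S (n+1) ∪ S (-(n:ℤ)-1))) := measure_mono hcover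
    _ ≤ ∑' n : ℕ, μ (S (n+1) ∪ S (-(n:ℤ)-1)) := measure_iUnion_le _
    _ ≤ ∑' n : ℕ, ENNReal.ofReal (4 * δ * (v / (Real.pi ^ 2 * ((n:ℝ)+1) ^ 2 + v ^ 2))) :=
        ENNReal.tsum_le_tsum hsummand
    _ = ENNReal.ofReal (∑' n : ℕ, 4 * δ * (v / (Real.pi ^ 2 * ((n:ℝ)+1) ^ 2 + v ^ 2))) :=
        (ENNReal.ofReal_tsum_of_nonneg (fun n => by positivity) hsum).symm
    _ ≤ ENNReal.ofReal (2 * δ) := ENNReal.ofReal_le_ofReal htsum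

lemma cos_cover {δ x : ℝ} (hδ : 0 < δ) (hδpi : δ ≤ Real.pi)
    (h : Real.cos δ < Real.cos x) : ∃ k : ℤ, |x - 2 * Real.pi * k| ≤ δ := by
  have hpi := Real.pi_pos
  set k := round (x / (2 * Real.pi)) with hk
  refine ⟨k, ?_⟩
  set s := x - 2 * Real.pi * k with hs
  have hsabs : |s| ≤ Real.pi := by
    have h1 : |x / (2 * Real.pi) - k| ≤ 1/2 := abs_sub_round _
    have h2 : s = 2 * Real.pi * (x / (2 * Real.pi) - k) := by
      rw [hs]; field_simp
    rw [h2, abs_mul, abs_of_pos (by positivity : (0:ℝ) < 2 * Real.pi)]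
    nlinarith
  have hcs : Real.cos s = Real.cos x := by
    rw [hs]
    have h4 := Real.cos_add_int_mul_two_pi x (-k)
    have h5 : x - 2 * Real.pi * k = x + ((-k : ℤ) : ℝ) * (2 * Real.pi) := by push_cast; ring
    rw [h5, h4]
  by_contra hcon
  push_neg at hcon
  have h3 : Real.cos |s| ≤ Real.cos δ := by
    apply Real.cos_le_cos_of_nonneg_of_le_pi (le_of_lt hδ) hsabs (le_of_lt hcon)
  rw [Real.cos_abs, hcs] at h3
  linarith

lemma normSq_exp_sub_one (x : ℝ) :
    Complex.normSq (Complex.exp (-(x:ℂ) * Complex.I) - 1) = 2 - 2 * Real.cos x := by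
  have h : Complex.exp (-(x:ℂ) * Complex.I) = Complex.cos x - Complex.sin x * Complex.I := by
    have h0 : -(x:ℂ) * Complex.I = (-(x:ℂ)) * Complex.I := by ring
    rw [h0, Complex.exp_mul_I, Complex.cos_neg, Complex.sin_neg]
    ring
  rw [h, ← Complex.ofReal_cos, ← Complex.ofReal_sin]
  rw [Complex.normSq_apply]
  simp only [Complex.sub_re, Complex.sub_im, Complex.mul_re, Complex.mul_im,
    Complex.ofReal_re, Complex.ofReal_im, Complex.I_re, Complex.I_im, Complex.one_re,
    Complex.one_im]
  ring_nf
  nlinarith [Real.sin_sq_add_cos_sq x]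

lemma wrapped_set_eq {δ : ℝ} (hδ1 : Real.cos δ < 1) :
    (fun x : ℝ => Complex.exp (-(x:ℂ) * Complex.I)) ⁻¹'
      {ζ : ℂ | Real.sqrt (2 - 2 * Real.cos δ) ≤ ‖ζ - 1‖}
      = {x : ℝ | Real.cos x ≤ Real.cos δ} := by
  ext x
  simp only [Set.mem_preimage, Set.mem_setOf_eq]
  rw [Complex.norm_def, normSq_exp_sub_one]
  rw [Real.sqrt_le_sqrt_iff (by nlinarith [Real.cos_le_one x, Real.cos_le_one δ])]
  constructor <;> intro h <;> linarith

/-- coverage: everything is in cos-set, central window, or far union -/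
lemma cover_univ {μ : Measure ℝ} {δ : ℝ} (hδ : 0 < δ) (hδpi : δ ≤ Real.pi) :
    (Set.univ : Set ℝ) ⊆ {x : ℝ | Real.cos x ≤ Real.cos δ}
      ∪ Set.Icc (2 * Real.pi * (dd0 μ δ) - δ) (2 * Real.pi * (dd0 μ δ) + δ)
      ∪ (⋃ j : ℤ, if j = 0 then (∅ : Set ℝ) else
          Set.Icc (2 * Real.pi * ((dd0 μ δ + j : ℤ)) - δ) (2 * Real.pi * ((dd0 μ δ + j : ℤ)) + δ)) := by
  intro x _
  by_cases hc : Real.cos x ≤ Real.cos δ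
  · exact Or.inl (Or.inl hc)
  · push_neg at hc
    obtain ⟨k, hk⟩ := cos_cover hδ hδpi hc
    have hmem : x ∈ Set.Icc (2 * Real.pi * k - δ) (2 * Real.pi * k + δ) := by
      rw [Set.mem_Icc]
      rw [abs_le] at hk
      constructor <;> linarith [hk.1, hk.2]
    by_cases hkd : k = dd0 μ δ
    · subst hkd; exact Or.inl (Or.inr hmem)
    · apply Or.inr
      rw [Set.mem_iUnion]
      refine ⟨k - dd0 μ δ, ?_⟩
      rw [if_neg (by omega)]
      have : dd0 μ δ + (k - dd0 μ δ) = k := by ring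
      rw [this]
      exact hmem

section Shift
variable {μ : Measure ℝ} (a : ℝ)

lemma measurable_wrapfun : Measurable (fun x : ℝ => Complex.exp (-(x:ℂ) * Complex.I)) := by
  fun_prop

lemma shift_prob [IsProbabilityMeasure μ] : IsProbabilityMeasure (μ.map (fun x => x + a)) :=
  Measure.isProbabilityMeasure_map (measurable_id.add_const a).aemeasurable

lemma shift_cauchyG [IsProbabilityMeasure μ] {z : ℂ} (hz : 0 < z.im) :
    cauchyG (μ.map (fun x => x + a)) z = cauchyG μ (z - a) := by
  rw [cauchyG, integral_map (measurable_add_const a).aemeasurable]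
  · rw [cauchyG]
    congr 1
    ext x
    push_cast
    ring_nf
  · have hc : Continuous (fun x : ℝ => (z - (x:ℂ))⁻¹) := by
      apply Continuous.inv₀ (by continuity)
      intro x h
      have : (z - x).im = 0 := by rw [h]; simp
      simp [Complex.sub_im] at this
      linarith
    exact hc.aestronglyMeasurable

lemma shift_Ftrans [IsProbabilityMeasure μ] {z : ℂ} (hz : 0 < z.im) :
    Ftrans (μ.map (fun x => x + a)) z = Ftrans μ (z - a) := by
  rw [Ftrans, Ftrans, shift_cauchyG a hz]

lemma shift_classL [IsProbabilityMeasure μ] (hL : inClassL μ) :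
    inClassL (μ.map (fun x => x + a)) := by
  intro z hz
  have hz' : 0 < z.im := hz
  have h1 : 0 < (z + 2 * (Real.pi:ℂ)).im := by
    simp only [Complex.add_im, Complex.mul_im]
    simp [hz']
  rw [shift_Ftrans a h1, shift_Ftrans a hz']
  have h2 : z + 2 * (Real.pi:ℂ) - a = (z - a) + 2 * Real.pi := by ring
  rw [h2]
  apply hL
  show 0 < (z - (a:ℂ)).im
  simp [hz']

lemma shift_wrap (m : ℤ) : wrap (μ.map (fun x => x + 2 * Real.pi * m)) = wrap μ := by
  rw [wrap, wrap, Measure.map_map]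
  · congr 1
    ext x
    simp only [Function.comp_apply]
    push_cast
    rw [show (-(((x:ℂ)) + 2 * (Real.pi:ℂ) * m) * Complex.I)
        = (-(x:ℂ) * Complex.I) + ((-m : ℤ) : ℂ) * (2 * (Real.pi:ℂ) * Complex.I) by push_cast; ring]
    rw [Complex.exp_add]
    rw [Complex.exp_int_mul_two_pi_mul_I (-m)]
    ring
  · exact measurable_wrapfun
  · exact measurable_add_const _

end Shift

lemma cos_lt_one' {δ : ℝ} (hδ : 0 < δ) (hδpi : δ ≤ Real.pi) : Real.cos δ < 1 := by
  have h := Real.strictAntiOn_cos (Set.mem_Icc.2 ⟨le_refl 0, Real.pi_pos.le⟩)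
      (Set.mem_Icc.2 ⟨hδ.le, hδpi⟩) hδ
  rwa [Real.cos_zero] at h

lemma measurableSet_circle (s : ℝ) : MeasurableSet {ζ : ℂ | s ≤ ‖ζ - 1‖} :=
  (isClosed_le continuous_const ((continuous_norm).comp
    (continuous_id.sub continuous_const))).measurableSet

/-- the cos-set measure equals the wrapped measure of a circle annulus -/
lemma cos_set_eq_wrap (μ : Measure ℝ) {δ : ℝ} (hδ : 0 < δ) (hδpi : δ ≤ Real.pi) :
    wrap μ {ζ : ℂ | Real.sqrt (2 - 2 * Real.cos δ) ≤ ‖ζ - 1‖}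
      = μ {x : ℝ | Real.cos x ≤ Real.cos δ} := by
  rw [wrap, Measure.map_apply measurable_wrapfun (measurableSet_circle _)]
  rw [wrapped_set_eq (cos_lt_one' hδ hδpi)]

/-- Key per-measure estimate: far mass -/
lemma key_est {μ : Measure ℝ} [IsProbabilityMeasure μ] (hL : inClassL μ)
    {δ ε : ℝ} (hδ : 0 < δ) (hδ8 : δ ≤ 1/8) (hδε : δ < ε) :
    μ {x : ℝ | ε ≤ |x - 2 * Real.pi * (dd0 μ δ)|}
      ≤ μ {x : ℝ | Real.cos x ≤ Real.cos δ} + ENNReal.ofReal (2 * δ) := by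
  have hδpi : δ ≤ Real.pi := by nlinarith [Real.pi_gt_three]
  have hsub : {x : ℝ | ε ≤ |x - 2 * Real.pi * (dd0 μ δ)|}
      ⊆ {x : ℝ | Real.cos x ≤ Real.cos δ}
        ∪ (⋃ j : ℤ, if j = 0 then (∅ : Set ℝ) else
          Set.Icc (2 * Real.pi * ((dd0 μ δ + j : ℤ)) - δ) (2 * Real.pi * ((dd0 μ δ + j : ℤ)) + δ)) := by
    intro x hx
    simp only [Set.mem_setOf_eq] at hx
    by_cases hc : Real.cos x ≤ Real.cos δ
    · exact Or.inl hc
    · push_neg at hc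
      obtain ⟨k, hk⟩ := cos_cover hδ hδpi hc
      by_cases hkd : k = dd0 μ δ
      · exfalso
        subst hkd
        linarith
      · apply Or.inr
        rw [Set.mem_iUnion]
        refine ⟨k - dd0 μ δ, ?_⟩
        rw [if_neg (by omega)]
        have he : dd0 μ δ + (k - dd0 μ δ) = k := by ring
        rw [he, Set.mem_Icc]
        rw [abs_le] at hk
        constructor <;> push_cast <;> linarith [hk.1, hk.2]
  calc μ {x : ℝ | ε ≤ |x - 2 * Real.pi * (dd0 μ δ)|}
      ≤ μ ({x : ℝ | Real.cos x ≤ Real.cos δ}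
        ∪ (⋃ j : ℤ, if j = 0 then (∅ : Set ℝ) else
          Set.Icc (2 * Real.pi * ((dd0 μ δ + j : ℤ)) - δ) (2 * Real.pi * ((dd0 μ δ + j : ℤ)) + δ))) :=
        measure_mono hsub
    _ ≤ μ {x : ℝ | Real.cos x ≤ Real.cos δ}
        + μ (⋃ j : ℤ, if j = 0 then (∅ : Set ℝ) else
          Set.Icc (2 * Real.pi * ((dd0 μ δ + j : ℤ)) - δ) (2 * Real.pi * ((dd0 μ δ + j : ℤ)) + δ)) :=
        measure_union_le _ _
    _ ≤ _ := by
        apply add_le_add_right (far_union_bound hL hδ)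

/-- central window carries most of the mass -/
lemma central_mass {μ : Measure ℝ} [IsProbabilityMeasure μ] (hL : inClassL μ)
    {δ : ℝ} (hδ : 0 < δ) (hδ8 : δ ≤ 1/8) :
    1 ≤ μ {x : ℝ | Real.cos x ≤ Real.cos δ} + ENNReal.ofReal (2 * δ)
      + μ (Set.Icc (2 * Real.pi * (dd0 μ δ) - δ) (2 * Real.pi * (dd0 μ δ) + δ)) := by
  have hδpi : δ ≤ Real.pi := by nlinarith [Real.pi_gt_three]
  have h1 : (1 : ℝ≥0∞) = μ Set.univ := (measure_univ).symm
  rw [h1]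
  calc μ Set.univ ≤ μ ({x : ℝ | Real.cos x ≤ Real.cos δ}
      ∪ Set.Icc (2 * Real.pi * (dd0 μ δ) - δ) (2 * Real.pi * (dd0 μ δ) + δ)
      ∪ (⋃ j : ℤ, if j = 0 then (∅ : Set ℝ) else
          Set.Icc (2 * Real.pi * ((dd0 μ δ + j : ℤ)) - δ) (2 * Real.pi * ((dd0 μ δ + j : ℤ)) + δ))) :=
        measure_mono (cover_univ hδ hδpi)
    _ ≤ (μ {x : ℝ | Real.cos x ≤ Real.cos δ}
        + μ (Set.Icc (2 * Real.pi * (dd0 μ δ) - δ) (2 * Real.pi * (dd0 μ δ) + δ)))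
        + μ (⋃ j : ℤ, if j = 0 then (∅ : Set ℝ) else
          Set.Icc (2 * Real.pi * ((dd0 μ δ + j : ℤ)) - δ) (2 * Real.pi * ((dd0 μ δ + j : ℤ)) + δ)) :=
        le_trans (measure_union_le _ _) (add_le_add_left (measure_union_le _ _) _)
    _ ≤ _ := by
        rw [add_assoc, add_assoc]
        apply add_le_add_right
        rw [add_comm]
        apply add_le_add_left (far_union_bound hL hδ)

lemma consistency {μ : Measure ℝ} [IsProbabilityMeasure μ]
    {δ1 δ2 : ℝ} {d1 d2 : ℤ} (hδ1 : 0 < δ1) (h18 : δ1 ≤ 1/8) (hδ2 : 0 < δ2) (h28 : δ2 ≤ 1/8)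
    (hm1 : ENNReal.ofReal (1/2) < μ (Set.Icc (2 * Real.pi * d1 - δ1) (2 * Real.pi * d1 + δ1)))
    (hm2 : ENNReal.ofReal (1/2) < μ (Set.Icc (2 * Real.pi * d2 - δ2) (2 * Real.pi * d2 + δ2))) :
    d1 = d2 := by
  by_contra hne
  have hpi := Real.pi_gt_three
  have hdisj : Disjoint (Set.Icc (2 * Real.pi * (d1:ℝ) - δ1) (2 * Real.pi * d1 + δ1))
      (Set.Icc (2 * Real.pi * (d2:ℝ) - δ2) (2 * Real.pi * d2 + δ2)) := by
    rw [Set.disjoint_left]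
    intro x hx1 hx2
    rw [Set.mem_Icc] at hx1 hx2
    have hd : (1:ℝ) ≤ |(d1:ℝ) - d2| := by
      rw [← Int.cast_sub, ← Int.cast_abs]
      have : (1:ℤ) ≤ |d1 - d2| := Int.one_le_abs (by omega)
      exact_mod_cast this
    have : |2 * Real.pi * (d1:ℝ) - 2 * Real.pi * d2| = 2 * Real.pi * |(d1:ℝ) - d2| := by
      rw [← mul_sub, abs_mul, abs_of_pos (by positivity : (0:ℝ) < 2 * Real.pi)]
    have h6 : 2 * Real.pi * |(d1:ℝ) - d2| ≤ δ1 + δ2 := by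
      rw [← this]
      calc |2 * Real.pi * (d1:ℝ) - 2 * Real.pi * d2|
          = |(2 * Real.pi * (d1:ℝ) - x) - (2 * Real.pi * (d2:ℝ) - x)| := by congr 1; ring
        _ ≤ |2 * Real.pi * (d1:ℝ) - x| + |2 * Real.pi * (d2:ℝ) - x| := abs_sub _ _
        _ ≤ δ1 + δ2 := by
            apply add_le_add <;> rw [abs_le] <;> constructor <;> linarith [hx1.1, hx1.2, hx2.1, hx2.2]
    nlinarith
  have hsum := measure_union (μ := μ) hdisj measurableSet_Icc
  have hle : μ (Set.Icc (2 * Real.pi * (d1:ℝ) - δ1) (2 * Real.pi * d1 + δ1)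
      ∪ Set.Icc (2 * Real.pi * (d2:ℝ) - δ2) (2 * Real.pi * d2 + δ2)) ≤ 1 := prob_le_one
  rw [hsum] at hle
  have hgt : (1:ℝ≥0∞) < μ (Set.Icc (2 * Real.pi * (d1:ℝ) - δ1) (2 * Real.pi * d1 + δ1))
      + μ (Set.Icc (2 * Real.pi * (d2:ℝ) - δ2) (2 * Real.pi * d2 + δ2)) := by
    have : (1:ℝ≥0∞) = ENNReal.ofReal (1/2) + ENNReal.ofReal (1/2) := by
      rw [← ENNReal.ofReal_add (by norm_num) (by norm_num)]
      norm_num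
    rw [this]
    exact ENNReal.add_lt_add hm1 hm2
  exact absurd hle (not_le.2 hgt)

lemma exists_ofReal_le {τ : ℝ≥0∞} (hτ : 0 < τ) : ∃ r : ℝ, 0 < r ∧ ENNReal.ofReal r ≤ τ := by
  rcases eq_or_ne τ ⊤ with h | h
  · exact ⟨1, one_pos, h ▸ le_top⟩
  · refine ⟨τ.toReal, ENNReal.toReal_pos hτ.ne' h, ?_⟩
    rw [ENNReal.ofReal_toReal h]

theorem infinitesimal_array_lifts'
    (k : ℕ → ℕ)
    (ν : (n : ℕ) → Fin (k n) → Measure ℂ)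
    (hwrap : ∀ n (i : Fin (k n)), ∃ μ : Measure ℝ,
      IsProbabilityMeasure μ ∧ inClassL μ ∧ wrap μ = ν n i)
    (hinf : ∀ ε : ℝ, 0 < ε →
      Tendsto (fun n => ⨆ i : Fin (k n), ν n i {ζ : ℂ | ε ≤ ‖ζ - 1‖})
        atTop (nhds 0)) :
    ∃ μarr : (n : ℕ) → Fin (k n) → Measure ℝ,
      (∀ n (i : Fin (k n)), IsProbabilityMeasure (μarr n i) ∧ inClassL (μarr n i) ∧
        wrap (μarr n i) = ν n i) ∧
      (∀ ε : ℝ, 0 < ε →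
        Tendsto (fun n => ⨆ i : Fin (k n), μarr n i {x : ℝ | ε ≤ |x|})
          atTop (nhds 0)) := by
  classical
  choose μ0 hp hl hw using hwrap
  have hpi := Real.pi_gt_three
  refine ⟨fun n i => (μ0 n i).map
    (fun x => x + 2 * Real.pi * ((-(dd0 (μ0 n i) (1/8)) : ℤ) : ℝ)), ?_, ?_⟩
  · intro n i
    haveI := hp n i
    exact ⟨shift_prob _, shift_classL _ (hl n i), by rw [shift_wrap]; exact hw n i⟩
  · intro ε hε
    rw [ENNReal.tendsto_nhds_zero]
    intro τ hτ
    obtain ⟨r, hr0, hrτ⟩ := exists_ofReal_le hτ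
    set δ : ℝ := min (min (ε/2) (1/8)) (r/4) with hδdef
    have hδ0 : 0 < δ := by positivity
    have hδ8 : δ ≤ 1/8 := le_trans (min_le_left _ _) (min_le_right _ _)
    have hδε : δ < ε := lt_of_le_of_lt (le_trans (min_le_left _ _) (min_le_left _ _)) (by linarith)
    have h2δr : 2 * δ ≤ r / 2 := by
      have := min_le_right (min (ε/2) (1/8)) (r/4)
      linarith
    have hδpi : δ ≤ Real.pi := by nlinarith
    have h8pi : (1:ℝ)/8 ≤ Real.pi := by nlinarith
    have hs1 : 0 < Real.sqrt (2 - 2 * Real.cos δ) :=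
      Real.sqrt_pos.2 (by nlinarith [cos_lt_one' hδ0 hδpi])
    have hs0 : 0 < Real.sqrt (2 - 2 * Real.cos (1/8)) :=
      Real.sqrt_pos.2 (by nlinarith [cos_lt_one' (by norm_num : (0:ℝ) < 1/8) h8pi])
    have E1 := (ENNReal.tendsto_nhds_zero.1 (hinf _ hs1))
      (ENNReal.ofReal (min (r/2) (1/8))) (ENNReal.ofReal_pos.2 (by positivity))
    have E0 := (ENNReal.tendsto_nhds_zero.1 (hinf _ hs0))
      (ENNReal.ofReal (1/8)) (ENNReal.ofReal_pos.2 (by norm_num))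
    filter_upwards [E1, E0] with n h1 h0
    apply iSup_le
    intro i
    haveI := hp n i
    -- cos-set bounds
    have hcos1 : μ0 n i {x : ℝ | Real.cos x ≤ Real.cos δ} ≤ ENNReal.ofReal (min (r/2) (1/8)) := by
      rw [← cos_set_eq_wrap (μ0 n i) hδ0 hδpi, hw n i]
      exact le_trans (le_iSup (fun j => ν n j {ζ : ℂ | Real.sqrt (2 - 2 * Real.cos δ) ≤ ‖ζ - 1‖}) i) h1
    have hcos0 : μ0 n i {x : ℝ | Real.cos x ≤ Real.cos (1/8)} ≤ ENNReal.ofReal (1/8) := by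
      rw [← cos_set_eq_wrap (μ0 n i) (by norm_num) h8pi, hw n i]
      exact le_trans (le_iSup (fun j => ν n j {ζ : ℂ | Real.sqrt (2 - 2 * Real.cos (1/8)) ≤ ‖ζ - 1‖}) i) h0
    -- central window masses
    have hwingen : ∀ δ' : ℝ, 0 < δ' → δ' ≤ 1/8 →
        μ0 n i {x : ℝ | Real.cos x ≤ Real.cos δ'} ≤ ENNReal.ofReal (1/8) →
        ENNReal.ofReal (1/2) < μ0 n i (Set.Icc (2 * Real.pi * (dd0 (μ0 n i) δ') - δ')
          (2 * Real.pi * (dd0 (μ0 n i) δ') + δ')) := by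
      intro δ' hδ'0 hδ'8 hcs
      by_contra hcon
      push_neg at hcon
      have hc := central_mass (hl n i) hδ'0 hδ'8
      have : (1:ℝ≥0∞) ≤ ENNReal.ofReal (1/8) + ENNReal.ofReal (2 * δ') + ENNReal.ofReal (1/2) :=
        le_trans hc (add_le_add (add_le_add hcs (le_refl _)) hcon)
      rw [← ENNReal.ofReal_add (by norm_num) (by linarith),
        ← ENNReal.ofReal_add (by linarith) (by norm_num)] at this
      have hlt : ENNReal.ofReal (1/8 + 2 * δ' + 1/2) < 1 := by
        rw [← ENNReal.ofReal_one]
        apply ENNReal.ofReal_lt_ofReal_iff_of_nonneg (by linarith) |>.2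
        linarith
      exact absurd (lt_of_le_of_lt this hlt) (lt_irrefl _)
    have hwin1 := hwingen δ hδ0 hδ8 (le_trans hcos1 (ENNReal.ofReal_le_ofReal (min_le_right _ _)))
    have hwin0 := hwingen (1/8) (by norm_num) le_rfl hcos0
    have hdd : dd0 (μ0 n i) δ = dd0 (μ0 n i) (1/8) :=
      consistency hδ0 hδ8 (by norm_num) le_rfl hwin1 hwin0
    -- final rewriting
    have hmset : MeasurableSet {x : ℝ | ε ≤ |x|} :=
      (isClosed_le continuous_const _root_.continuous_abs).measurableSet
    have hmap : (μ0 n i).map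
        (fun x => x + 2 * Real.pi * ((-(dd0 (μ0 n i) (1/8)) : ℤ) : ℝ)) {x : ℝ | ε ≤ |x|}
        = μ0 n i {x : ℝ | ε ≤ |x - 2 * Real.pi * (dd0 (μ0 n i) (1/8))|} := by
      rw [Measure.map_apply (measurable_add_const _) hmset]
      congr 1
      ext x
      simp only [Set.mem_preimage, Set.mem_setOf_eq]
      constructor <;> intro hx <;> [skip; skip] <;>
        · convert hx using 2
          push_cast
          ring
    rw [hmap, ← hdd]
    calc μ0 n i {x : ℝ | ε ≤ |x - 2 * Real.pi * (dd0 (μ0 n i) δ)|}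
        ≤ μ0 n i {x : ℝ | Real.cos x ≤ Real.cos δ} + ENNReal.ofReal (2 * δ) :=
          key_est (hl n i) hδ0 hδ8 hδε
      _ ≤ ENNReal.ofReal (r/2) + ENNReal.ofReal (r/2) :=
          add_le_add (le_trans hcos1 (ENNReal.ofReal_le_ofReal (min_le_left _ _)))
            (ENNReal.ofReal_le_ofReal h2δr)
      _ = ENNReal.ofReal r := by
          rw [← ENNReal.ofReal_add (by linarith) (by linarith)]
          congr 1
          ring
      _ ≤ τ := hrτ

end LA2

/-- An infinitesimal triangular array of wrapped measures on the circle lifts to an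
infinitesimal triangular array in the class `L` on the line. -/
theorem infinitesimal_array_lifts
    (k : ℕ → ℕ)
    (ν : (n : ℕ) → Fin (k n) → Measure ℂ)
    (hwrap : ∀ n (i : Fin (k n)), ∃ μ : Measure ℝ,
      IsProbabilityMeasure μ ∧ inClassL μ ∧ wrap μ = ν n i)
    (hinf : ∀ ε : ℝ, 0 < ε →
      Tendsto (fun n => ⨆ i : Fin (k n), ν n i {ζ : ℂ | ε ≤ ‖ζ - 1‖})
        atTop (nhds 0)) :
    ∃ μarr : (n : ℕ) → Fin (k n) → Measure ℝ,
      (∀ n (i : Fin (k n)), IsProbabilityMeasure (μarr n i) ∧ inClassL (μarr n i) ∧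
        wrap (μarr n i) = ν n i) ∧
      (∀ ε : ℝ, 0 < ε →
        Tendsto (fun n => ⨆ i : Fin (k n), μarr n i {x : ℝ | ε ≤ |x|})
          atTop (nhds 0)) := by
  exact LA2.infinitesimal_array_lifts' k ν hwrap hinf

end
end
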